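/- arXiv:1404.2352 — 3 statements merged into one kernel-verified Lean document; each statement's English description precedes it below -/
import Mathlib

section
/- For every α > 0 and k' > 0 there exist a > 0 and n₀ ∈ ℕ such that for all n ≥ n₀, with m = ⌈αn⌉, and for every vector c ∈ ℝ^n with Σ_{j=1}^n c_j² ≥ k'·n, the random matrix H ∈ ℝ^{m×n} with i.i.d. standard Gaussian N(0,1) entries satisfies P( ‖Hc‖² < a·n·log n ) ≤ exp(−a·n·log n), where Hc = Σ_{j=1}^n c_j h_j and h_j denotes the j-th column of H. -/
open MeasureTheory ProbabilityTheory Real Set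
open scoped NNReal ENNReal

noncomputable def euclNorm {m : ℕ} (v : Fin m → ℝ) : ℝ := Real.sqrt (∑ i, (v i)^2)

noncomputable def mulVec' {m n : ℕ} (H : Fin m → Fin n → ℝ) (x : Fin n → ℝ) : Fin m → ℝ :=
  fun i => ∑ j, H i j * x j

noncomputable def sgn (t : ℝ) : ℝ := if 0 < t then 1 else -1

def cube (n : ℕ) : Set (Fin n → ℝ) := {x | ∀ i, x i ∈ Set.Icc (-1:ℝ) 1}

noncomputable def resid {m n : ℕ} (H : Fin m → Fin n → ℝ) (y : Fin m → ℝ) (x : Fin n → ℝ) : ℝ :=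
  euclNorm (fun i => y i - mulVec' H x i)

def solSet {m n : ℕ} (H : Fin m → Fin n → ℝ) (y : Fin m → ℝ) : Set (Fin n → ℝ) :=
  {x | x ∈ cube n ∧ ∀ z ∈ cube n, resid H y x ≤ resid H y z}

noncomputable def gaussianH (m n : ℕ) : Measure (Fin m → Fin n → ℝ) :=
  Measure.pi fun _ => Measure.pi fun _ => gaussianReal 0 1

noncomputable def gaussianNoise (m : ℕ) (σ : ℝ) : Measure (Fin m → ℝ) :=
  Measure.pi fun _ => gaussianReal 0 (Real.toNNReal (σ^2))

noncomputable def unifIcc : Measure ℝ := ((2:ℝ≥0)⁻¹) • volume.restrict (Set.Icc (-1:ℝ) 1)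

noncomputable def unifCube (n : ℕ) : Measure (Fin n → ℝ) := Measure.pi fun _ => unifIcc


instance gaussianNoise.instProb (m : ℕ) (σ : ℝ) : IsProbabilityMeasure (gaussianNoise m σ) := by
  unfold gaussianNoise; infer_instance

instance gaussianH.instProb (m n : ℕ) : IsProbabilityMeasure (gaussianH m n) := by
  unfold gaussianH; infer_instance

instance unifIcc.instProb : IsProbabilityMeasure unifIcc := by
  constructor
  simp [unifIcc, Measure.smul_apply, Measure.restrict_apply, Real.volume_Icc]
  rw [show ((1:ℝ) + 1) = 2 by norm_num, ENNReal.ofReal_ofNat]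
  simp [ENNReal.smul_def, ENNReal.inv_mul_cancel]

instance unifCube.instProb (n : ℕ) : IsProbabilityMeasure (unifCube n) := by
  unfold unifCube; infer_instance


lemma meas_row {n : ℕ} (c : Fin n → ℝ) (b s : ℝ) :
    Measurable (fun x : Fin n → ℝ => ENNReal.ofReal (Real.exp (-(b * (s + ∑ j, c j * x j)^2)))) := by
  have h1 : Measurable fun x : Fin n → ℝ => ∑ j, c j * x j :=
    Finset.measurable_sum _ fun j _ => by fun_prop
  exact (Real.measurable_exp.comp
    ((((h1.const_add s).pow_const 2).const_mul b).neg)).ennreal_ofReal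

lemma g1 (b c s : ℝ) (hb : 0 ≤ b) :
    ∫⁻ x, ENNReal.ofReal (Real.exp (-(b * (s + c * x)^2))) ∂(gaussianReal 0 1)
      = ENNReal.ofReal ((Real.sqrt (1 + 2*b*c^2))⁻¹ * Real.exp (-(b * s^2) / (1 + 2*b*c^2))) := by
  have hKpos : (0:ℝ) < 1 + 2*b*c^2 := by positivity
  set K := 1 + 2*b*c^2 with hK
  have hB : (0:ℝ) < K/2 := by positivity
  have hmeas : Measurable fun x : ℝ => ENNReal.ofReal (Real.exp (-(b * (s + c * x)^2))) :=
    (Real.measurable_exp.comp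
      ((((measurable_id.const_mul c).const_add s).pow_const 2).const_mul b).neg).ennreal_ofReal
  rw [gaussianReal_of_var_ne_zero 0 one_ne_zero,
    lintegral_withDensity_eq_lintegral_mul _ (measurable_gaussianPDF 0 1) hmeas]
  have key : ∀ x : ℝ, (gaussianPDF 0 1 * fun x => ENNReal.ofReal (Real.exp (-(b * (s + c * x)^2)))) x
      = ENNReal.ofReal (((Real.sqrt (2*π))⁻¹ * Real.exp (-(b*s^2)/K))
          * Real.exp (-(K/2) * (x + 2*b*c*s/K)^2)) := by
    intro x
    simp only [Pi.mul_apply, gaussianPDF, gaussianPDFReal]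
    rw [← ENNReal.ofReal_mul (by positivity)]
    congr 1
    push_cast
    rw [mul_assoc ((Real.sqrt (2*π))⁻¹), ← Real.exp_add, mul_assoc, ← Real.exp_add]
    rw [mul_one, mul_one]
    congr 2
    field_simp
    ring
  simp only [key]
  have hmeas2 : Measurable fun x : ℝ => ENNReal.ofReal (Real.exp (-(K/2) * (x + 2*b*c*s/K)^2)) :=
    (Real.measurable_exp.comp
      ((((measurable_id.add_const _).pow_const 2).const_mul _))).ennreal_ofReal
  simp_rw [ENNReal.ofReal_mul (by positivity : (0:ℝ) ≤ (Real.sqrt (2*π))⁻¹ * Real.exp (-(b*s^2)/K))]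
  rw [lintegral_const_mul _ hmeas2]
  have hint : Integrable (fun x : ℝ => Real.exp (-(K/2) * (x + 2*b*c*s/K)^2)) := by
    have hmp := measurePreserving_add_right (volume : Measure ℝ) (2*b*c*s/K)
    exact (hmp.integrable_comp (integrable_exp_neg_mul_sq hB).1).mpr
      (integrable_exp_neg_mul_sq hB)
  rw [← ofReal_integral_eq_lintegral_ofReal hint (ae_of_all _ fun x => (Real.exp_nonneg _))]
  rw [integral_add_right_eq_self (fun x : ℝ => Real.exp (-(K/2) * x^2)) (2*b*c*s/K),
    integral_gaussian]
  rw [← ENNReal.ofReal_mul (by positivity)]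
  congr 1
  have h2π : (0:ℝ) < Real.sqrt (2*π) := Real.sqrt_pos.mpr (by positivity)
  have hdiv : π / (K/2) = 2*π/K := by field_simp
  rw [hdiv, Real.sqrt_div (by positivity), mul_right_comm, div_eq_mul_inv, ← mul_assoc,
    inv_mul_cancel₀ h2π.ne', one_mul]

lemma g2 (b : ℝ) (hb : 0 ≤ b) : ∀ (n : ℕ) (c : Fin n → ℝ) (s : ℝ),
    ∫⁻ x, ENNReal.ofReal (Real.exp (-(b * (s + ∑ j, c j * x j)^2)))
        ∂(Measure.pi fun _ : Fin n => gaussianReal 0 1)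
      = ENNReal.ofReal ((Real.sqrt (1 + 2*b*∑ j, (c j)^2))⁻¹
          * Real.exp (-(b * s^2) / (1 + 2*b*∑ j, (c j)^2))) := by
  intro n
  induction n with
  | zero =>
    intro c s
    simp [lintegral_const]
  | succ n ih =>
    intro c s
    set T := ∑ j : Fin n, (c j.succ)^2 with hT
    have hT0 : (0:ℝ) ≤ T := by positivity
    have hXpos : (0:ℝ) < 1 + 2*b*T := by positivity
    set e := MeasurableEquiv.piFinSuccAbove (fun _ : Fin (n+1) => ℝ) 0
    have hMP := (measurePreserving_piFinSuccAbove (fun _ : Fin (n+1) => gaussianReal 0 1) 0)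
    rw [(hMP.symm e).lintegral_map_equiv
      (fun x => ENNReal.ofReal (Real.exp (-(b * (s + ∑ j, c j * x j)^2)))) e.symm]
    have heq : ∀ p : ℝ × (Fin n → ℝ), (s + ∑ j, c j * (e.symm p) j)
        = (s + c 0 * p.1) + ∑ j : Fin n, c j.succ * p.2 j := by
      intro p
      simp only [e, MeasurableEquiv.piFinSuccAbove_symm_apply, Fin.insertNthEquiv,
        Equiv.coe_fn_mk, Fin.insertNth_zero]
      rw [Fin.sum_univ_succ]
      simp [Fin.cons_zero, Fin.cons_succ, add_assoc]
    simp_rw [heq]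
    rw [lintegral_prod _ (by
      have h1 : Measurable fun p : ℝ × (Fin n → ℝ) => (s + c 0 * p.1) + ∑ j : Fin n, c j.succ * p.2 j := by
        apply Measurable.add
        · exact (measurable_fst.const_mul (c 0)).const_add s
        · exact Finset.measurable_sum _ fun j _ => by fun_prop
      exact (Real.measurable_exp.comp (((h1.pow_const 2).const_mul b).neg)).ennreal_ofReal |>.aemeasurable)]
    have hinner : ∀ x : ℝ, ∫⁻ y, ENNReal.ofReal
          (Real.exp (-(b * ((s + c 0 * x) + ∑ j : Fin n, c j.succ * y j)^2)))
          ∂(Measure.pi fun _ : Fin n => gaussianReal 0 1)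
        = ENNReal.ofReal ((Real.sqrt (1 + 2*b*T))⁻¹)
          * ENNReal.ofReal (Real.exp (-((b/(1+2*b*T)) * (s + c 0 * x)^2))) := by
      intro x
      rw [ih (fun j => c j.succ) (s + c 0 * x), ENNReal.ofReal_mul (by positivity)]
      congr 2
      field_simp
      rw [hT]
    simp_rw [hinner]
    rw [lintegral_const_mul _ (by
      exact (Real.measurable_exp.comp ((((measurable_id.const_mul (c 0)).const_add s).pow_const 2).const_mul _).neg).ennreal_ofReal)]
    rw [g1 (b/(1+2*b*T)) (c 0) s (by positivity)]
    rw [← ENNReal.ofReal_mul (by positivity)]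
    have hsum : ∑ j : Fin (n+1), (c j)^2 = (c 0)^2 + T := by
      rw [hT, Fin.sum_univ_succ]
    rw [hsum]
    congr 1
    have hZpos : (0:ℝ) < 1 + 2*b*((c 0)^2 + T) := by positivity
    have hq : 1 + 2*(b/(1+2*b*T))*(c 0)^2 = (1 + 2*b*((c 0)^2 + T)) / (1+2*b*T) := by
      field_simp
      ring
    rw [hq]
    have hsqrt : (Real.sqrt (1+2*b*T))⁻¹ * (Real.sqrt ((1 + 2*b*((c 0)^2 + T)) / (1+2*b*T)))⁻¹
        = (Real.sqrt (1 + 2*b*((c 0)^2 + T)))⁻¹ := by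
      rw [← mul_inv, ← Real.sqrt_mul hXpos.le, mul_div_cancel₀ _ hXpos.ne']
    have hexp : -(b/(1+2*b*T) * s^2) / ((1 + 2*b*((c 0)^2 + T)) / (1+2*b*T))
        = -(b * s^2) / (1 + 2*b*((c 0)^2 + T)) := by
      field_simp
    rw [← hsqrt, ← hexp]
    ring


lemma g3 {α : Type*} [MeasurableSpace α] (μ : Measure α) [IsProbabilityMeasure μ]
    (g : α → ℝ≥0∞) (hg : Measurable g) : ∀ (m : ℕ),
    ∫⁻ H, ∏ i : Fin m, g (H i) ∂(Measure.pi fun _ : Fin m => μ) = (∫⁻ y, g y ∂μ) ^ m := by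
  intro m
  induction m with
  | zero => simp
  | succ m ih =>
    set e := MeasurableEquiv.piFinSuccAbove (fun _ : Fin (m+1) => α) 0
    have hMP := (measurePreserving_piFinSuccAbove (fun _ : Fin (m+1) => μ) 0)
    rw [(hMP.symm e).lintegral_map_equiv (fun H => ∏ i : Fin (m+1), g (H i)) e.symm]
    have heq : ∀ p : α × (Fin m → α), ∏ i : Fin (m+1), g ((e.symm p) i)
        = g p.1 * ∏ i : Fin m, g (p.2 i) := by
      intro p
      simp only [e, MeasurableEquiv.piFinSuccAbove_symm_apply, Fin.insertNthEquiv,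
        Equiv.coe_fn_mk, Fin.insertNth_zero]
      rw [Fin.prod_univ_succ]
      simp [Fin.cons_zero, Fin.cons_succ]
    simp_rw [heq]
    have hmeas : Measurable fun y : Fin m → α => ∏ i : Fin m, g (y i) :=
      Finset.measurable_prod Finset.univ fun i _ => hg.comp (measurable_pi_apply i)
    exact (lintegral_prod_mul hg.aemeasurable hmeas.aemeasurable).trans
      (by rw [ih, pow_succ]; ring)


theorem gaussian_combination_lower_bound (α k' : ℝ) (hα : 0 < α) (hk' : 0 < k') :
    ∃ a : ℝ, 0 < a ∧ ∃ n₀ : ℕ, ∀ n : ℕ, n₀ ≤ n →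
      ∀ c : Fin n → ℝ, k' * n ≤ ∑ j, (c j)^2 →
      gaussianH (⌈α * n⌉₊) n {H | (euclNorm (mulVec' H c))^2 < a * n * Real.log n}
        ≤ ENNReal.ofReal (Real.exp (-(a * n * Real.log n))) := by
  refine ⟨α/8, by positivity, max 3 (⌈((2*k')⁻¹)^2⌉₊ + 1), fun n hn c hS => ?_⟩
  set m := ⌈α * (n:ℝ)⌉₊ with hmdef
  set S := ∑ j, (c j)^2 with hSdef
  set t := α/8 * (n:ℝ) * Real.log n with htdef
  have hn3 : 3 ≤ n := le_trans (le_max_left _ _) hn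
  have hnR : (3:ℝ) ≤ (n:ℝ) := by exact_mod_cast hn3
  have hnk : ((2*k')⁻¹)^2 < (n:ℝ) := by
    have h1 : ⌈((2*k')⁻¹)^2⌉₊ < n := by
      have := le_trans (le_max_right 3 (⌈((2*k')⁻¹)^2⌉₊ + 1)) hn
      omega
    exact lt_of_le_of_lt (Nat.le_ceil _) (by exact_mod_cast h1)
  have hSpos : (0:ℝ) < S := lt_of_lt_of_le (by positivity) hS
  have hmR : α * (n:ℝ) ≤ (m:ℝ) := Nat.le_ceil _
  set r := Real.sqrt (1 + 2*S) with hrdef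
  have hr1 : (1:ℝ) ≤ r := by
    nlinarith [Real.sq_sqrt (show (0:ℝ) ≤ 1+2*S by positivity), Real.sqrt_nonneg (1+2*S),
      Real.sqrt_nonneg (1+2*S)]
  have hrpos : (0:ℝ) < r := lt_of_lt_of_le one_pos hr1
  have hX : Measurable fun H : Fin m → Fin n → ℝ => ∑ i, (∑ j, H i j * c j)^2 :=
    Finset.measurable_sum _ fun i _ => (Finset.measurable_sum _ fun j _ =>
      by fun_prop).pow_const 2
  set g : (Fin n → ℝ) → ℝ≥0∞ :=
    fun y => ENNReal.ofReal (Real.exp (-(1 * ((0:ℝ) + ∑ j, c j * y j)^2))) with hgdef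
  have hgmeas : Measurable g := meas_row c 1 0
  have hrow : ∫⁻ y, g y ∂(Measure.pi fun _ : Fin n => gaussianReal 0 1)
      = ENNReal.ofReal r⁻¹ := by
    rw [hgdef, g2 1 zero_le_one n c 0]
    norm_num
    rfl
  have hEvent : {H : Fin m → Fin n → ℝ | (euclNorm (mulVec' H c))^2 < t}
      = {H : Fin m → Fin n → ℝ | (∑ i, (∑ j, H i j * c j)^2) < t} := by
    ext H
    simp only [Set.mem_setOf_eq, euclNorm, mulVec']
    rw [Real.sq_sqrt (by positivity)]
  have key1 : gaussianH m n {H : Fin m → Fin n → ℝ | (∑ i, (∑ j, H i j * c j)^2) < t}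
      ≤ ENNReal.ofReal (Real.exp t) * (ENNReal.ofReal r⁻¹)^m := by
    have hmeasf : Measurable fun H : Fin m → Fin n → ℝ =>
        ENNReal.ofReal (Real.exp (t - ∑ i, (∑ j, H i j * c j)^2)) :=
      (Real.measurable_exp.comp (measurable_const.sub hX)).ennreal_ofReal
    calc gaussianH m n {H : Fin m → Fin n → ℝ | (∑ i, (∑ j, H i j * c j)^2) < t}
        = ∫⁻ H in {H : Fin m → Fin n → ℝ | (∑ i, (∑ j, H i j * c j)^2) < t}, 1
            ∂gaussianH m n := (setLIntegral_one _).symm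
      _ ≤ ∫⁻ H in {H : Fin m → Fin n → ℝ | (∑ i, (∑ j, H i j * c j)^2) < t},
            ENNReal.ofReal (Real.exp (t - ∑ i, (∑ j, H i j * c j)^2)) ∂gaussianH m n := by
          refine setLIntegral_mono hmeasf fun H hH => ?_
          rw [show (1:ℝ≥0∞) = ENNReal.ofReal 1 by simp]
          exact ENNReal.ofReal_le_ofReal (Real.one_le_exp (by
            simp only [Set.mem_setOf_eq] at hH; linarith))
      _ ≤ ∫⁻ H, ENNReal.ofReal (Real.exp (t - ∑ i, (∑ j, H i j * c j)^2))
            ∂gaussianH m n := setLIntegral_le_lintegral _ _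
      _ = ENNReal.ofReal (Real.exp t) * ∫⁻ H, ENNReal.ofReal
            (Real.exp (-(∑ i, (∑ j, H i j * c j)^2))) ∂gaussianH m n := by
          simp_rw [sub_eq_add_neg, Real.exp_add, ENNReal.ofReal_mul (Real.exp_nonneg t)]
          rw [lintegral_const_mul _ (f := fun H : Fin m → Fin n → ℝ => ENNReal.ofReal (Real.exp (-(∑ i, (∑ j, H i j * c j)^2)))) (by fun_prop)]
      _ = ENNReal.ofReal (Real.exp t) * ∫⁻ H, ∏ i : Fin m, g (H i) ∂gaussianH m n := by
          congr 1
          refine lintegral_congr fun H => ?_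
          rw [show -(∑ i, (∑ j, H i j * c j)^2)
              = ∑ i : Fin m, -(1 * ((0:ℝ) + ∑ j, c j * H i j)^2) by
            simp only [one_mul, zero_add]
            rw [← Finset.sum_neg_distrib]
            refine Finset.sum_congr rfl fun i _ => ?_
            congr 2
            exact Finset.sum_congr rfl fun j _ => mul_comm _ _]
          rw [Real.exp_sum, ENNReal.ofReal_prod_of_nonneg fun i _ => Real.exp_nonneg _]
      _ = ENNReal.ofReal (Real.exp t) * (ENNReal.ofReal r⁻¹)^m := by
          rw [show gaussianH m n = Measure.pi fun _ : Fin m =>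
              (Measure.pi fun _ : Fin n => gaussianReal 0 1) from rfl,
            g3 _ g hgmeas m, hrow]
  have hlogn : 0 ≤ Real.log n := Real.log_nonneg (by linarith)
  have hsn : Real.sqrt n ≤ 1 + 2*S := by
    have h2k : (0:ℝ) < 2*k' := by positivity
    have h1 : (2*k')⁻¹ ≤ Real.sqrt n := by
      have := Real.sqrt_le_sqrt hnk.le
      rwa [Real.sqrt_sq (by positivity)] at this
    have h2 : (1:ℝ) ≤ 2*k' * Real.sqrt n := by
      have := mul_le_mul_of_nonneg_left h1 h2k.le
      rwa [mul_inv_cancel₀ h2k.ne'] at this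
    have h3 : Real.sqrt n ≤ 2*k'*(n:ℝ) := by
      calc Real.sqrt n = Real.sqrt n * 1 := (mul_one _).symm
        _ ≤ Real.sqrt n * (2*k' * Real.sqrt n) :=
            mul_le_mul_of_nonneg_left h2 (Real.sqrt_nonneg _)
        _ = 2*k' * (Real.sqrt n * Real.sqrt n) := by ring
        _ = 2*k'*(n:ℝ) := by rw [Real.mul_self_sqrt (by positivity)]
    nlinarith
  have hlog2 : Real.log n / 2 ≤ Real.log (1 + 2*S) := by
    have := Real.log_le_log (by positivity) hsn
    rwa [Real.log_sqrt (by positivity)] at this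
  have h2t : 2*t ≤ (m:ℝ) * Real.log r := by
    have hlogr : Real.log r = Real.log (1 + 2*S) / 2 := Real.log_sqrt (by positivity)
    calc 2*t = (α * (n:ℝ)) * (Real.log n / 4) := by rw [htdef]; ring
      _ ≤ (m:ℝ) * (Real.log (1 + 2*S) / 2) :=
          mul_le_mul hmR (by linarith) (by positivity) (Nat.cast_nonneg m)
      _ = (m:ℝ) * Real.log r := by rw [hlogr]
  have hrm : Real.exp (2*t) ≤ r^m := by
    have := Real.exp_le_exp.mpr h2t
    rwa [Real.exp_nat_mul, Real.exp_log hrpos] at this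
  have key2 : ENNReal.ofReal (Real.exp t) * (ENNReal.ofReal r⁻¹)^m
      ≤ ENNReal.ofReal (Real.exp (-t)) := by
    rw [← ENNReal.ofReal_pow (by positivity), ← ENNReal.ofReal_mul (Real.exp_nonneg t)]
    refine ENNReal.ofReal_le_ofReal ?_
    calc Real.exp t * (r⁻¹)^m = Real.exp t / r^m := by rw [inv_pow, div_eq_mul_inv]
      _ ≤ Real.exp t / Real.exp (2*t) := by gcongr
      _ = Real.exp (-t) := by rw [← Real.exp_sub]; congr 1; ring
  calc gaussianH m n {H : Fin m → Fin n → ℝ | (euclNorm (mulVec' H c))^2 < t}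
      = gaussianH m n {H : Fin m → Fin n → ℝ | (∑ i, (∑ j, H i j * c j)^2) < t} := by
        rw [hEvent]
    _ ≤ ENNReal.ofReal (Real.exp t) * (ENNReal.ofReal r⁻¹)^m := key1
    _ ≤ ENNReal.ofReal (Real.exp (-t)) := key2
end

section
/- Let Y be a real random variable with cumulative distribution function F(u) = P(Y ≤ u), and suppose there is ε ≥ 0 such that |F(u) − Φ(u)| ≤ ε for all u ∈ ℝ, where Φ is the standard normal cumulative distribution function. Then for every s > 0, E[ exp(−s·Y²) ] ≤ (1 + 2s)^{−1/2} + 2ε. -/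
open MeasureTheory ProbabilityTheory Real Set
open scoped NNReal ENNReal

/-- The standard normal cumulative distribution function. -/
noncomputable def Phi (x : ℝ) : ℝ := ∫ u in Set.Iic x, Real.exp (-u^2/2) / Real.sqrt (2*Real.pi)

lemma gauss_Iic (x : ℝ) : ((gaussianReal 0 1) (Set.Iic x)).toReal = Phi x := by
  rw [gaussianReal_apply_eq_integral _ one_ne_zero,
    ENNReal.toReal_ofReal (setIntegral_nonneg measurableSet_Iic
      (fun u _ => gaussianPDFReal_nonneg 0 1 u))]
  unfold Phi
  refine setIntegral_congr_fun measurableSet_Iic (fun u _ => ?_)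
  simp [gaussianPDFReal, div_eq_mul_inv, mul_comm]

lemma gauss_int (s : ℝ) (hs : 0 < s) :
    ∫ x, Real.exp (-s * x^2) ∂(gaussianReal 0 1) = (1 + 2 * s) ^ (-(1:ℝ) / 2) := by
  rw [gaussianReal_of_var_ne_zero _ one_ne_zero]
  simp only [gaussianPDF_def, ENNReal.ofReal]
  rw [integral_withDensity_eq_integral_smul₀ (f := fun x => (gaussianPDFReal 0 1 x).toNNReal) ?_ _]
  · have : ∀ x : ℝ, (gaussianPDFReal 0 1 x).toNNReal • Real.exp (-s * x^2)
        = (Real.sqrt (2*Real.pi))⁻¹ * Real.exp (-(s + 1/2) * x^2) := by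
      intro x
      rw [NNReal.smul_def, Real.coe_toNNReal _ (gaussianPDFReal_nonneg 0 1 x)]
      simp only [gaussianPDFReal, NNReal.coe_one, mul_one, sub_zero]
      rw [smul_eq_mul, mul_assoc, ← Real.exp_add]
      ring_nf
    simp_rw [this]
    rw [integral_const_mul, integral_gaussian]
    rw [show (-(1:ℝ)/2) = -(1/2) by norm_num, Real.rpow_neg (by positivity),
      ← Real.sqrt_eq_rpow, ← Real.sqrt_inv, ← Real.sqrt_inv, ← Real.sqrt_mul
      (by positivity)]
    congr 1
    have hπ := Real.pi_pos
    field_simp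
    ring
  · exact (measurable_gaussianPDFReal 0 1).real_toNNReal.aemeasurable

theorem exp_sq_expectation_berry_esseen {Ω : Type*} [MeasurableSpace Ω] (μ : Measure Ω)
    [IsProbabilityMeasure μ] (Y : Ω → ℝ) (hY : Measurable Y) (ε : ℝ) (hε : 0 ≤ ε)
    (hcdf : ∀ u : ℝ, |(μ {ω | Y ω ≤ u}).toReal - Phi u| ≤ ε) (s : ℝ) (hs : 0 < s) :
    (∫ ω, Real.exp (-s * (Y ω)^2) ∂μ) ≤ (1 + 2 * s) ^ (-(1:ℝ) / 2) + 2 * ε := by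
  set γ := gaussianReal 0 1 with hγ
  set g : ℝ → ℝ := fun x => Real.exp (-s * x^2) with hg
  have hg_nn : ∀ x, 0 ≤ g x := fun x => (Real.exp_pos _).le
  have hg_le : ∀ x, g x ≤ 1 := fun x => Real.exp_le_one_iff.mpr (by nlinarith [sq_nonneg x])
  have hgm : Measurable g := by fun_prop
  have hfm : Measurable fun ω => g (Y ω) := hgm.comp hY
  -- layer cake
  have key1 : ∫⁻ ω, ENNReal.ofReal (g (Y ω)) ∂μ = ∫⁻ t in Ioi (0:ℝ), μ {ω | t < g (Y ω)} :=
    lintegral_eq_lintegral_meas_lt μ (ae_of_all _ fun ω => hg_nn _) hfm.aemeasurable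
  have key2 : ∫⁻ x, ENNReal.ofReal (g x) ∂γ = ∫⁻ t in Ioi (0:ℝ), γ {x | t < g x} :=
    lintegral_eq_lintegral_meas_lt γ (ae_of_all _ hg_nn) hgm.aemeasurable
  -- the key slice bound
  have slice : ∀ t ∈ Ioc (0:ℝ) 1,
      μ {ω | t < g (Y ω)} ≤ γ {x | t < g x} + ENNReal.ofReal (2*ε) := by
    intro t ht
    obtain ⟨ht0, ht1⟩ := ht
    set a := Real.sqrt (Real.log t⁻¹ / s) with ha
    have ha0 : 0 ≤ a := Real.sqrt_nonneg _
    have hlog : 0 ≤ Real.log t⁻¹ := by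
      rw [Real.log_inv]; linarith [Real.log_nonpos ht0.le ht1]
    have haa : a^2 = Real.log t⁻¹ / s := Real.sq_sqrt (div_nonneg hlog hs.le)
    have hiff : ∀ y : ℝ, t < g y ↔ y ∈ Ioo (-a) a := by
      intro y
      rw [hg, mem_Ioo, ← Real.log_lt_iff_lt_exp ht0, ← abs_lt,
        ← abs_of_nonneg ha0, ← sq_lt_sq, haa, lt_div_iff₀ hs, Real.log_inv]
      constructor <;> intro h <;> nlinarith
    have hsetμ : {ω | t < g (Y ω)} = Y ⁻¹' (Ioo (-a) a) := by
      ext ω; simpa using hiff (Y ω)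
    have hsetγ : {x | t < g x} = Ioo (-a) a := by
      ext x; simpa using hiff x
    rw [hsetμ, hsetγ]
    -- real-valued inequality
    have hAB : (μ (Y ⁻¹' Ioo (-a) a)).toReal + (μ (Y ⁻¹' Iic (-a))).toReal
        ≤ (μ (Y ⁻¹' Iic a)).toReal := by
      have hdisj : Disjoint (Y ⁻¹' Ioo (-a) a) (Y ⁻¹' Iic (-a)) := by
        refine Disjoint.preimage _ (Set.disjoint_left.mpr ?_)
        rintro x ⟨hx1, _⟩ hx2
        exact absurd hx2 (not_le.mpr hx1)
      have e1 := measure_union (μ := μ) hdisj (hY measurableSet_Iic)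
      have e2 : μ (Y ⁻¹' Ioo (-a) a ∪ Y ⁻¹' Iic (-a)) ≤ μ (Y ⁻¹' Iic a) := by
        refine measure_mono (Set.union_subset (Set.preimage_mono ?_) (Set.preimage_mono ?_))
        · exact le_trans Set.Ioo_subset_Ioc_self Set.Ioc_subset_Iic_self
        · exact Set.Iic_subset_Iic.mpr (by linarith)
      rw [e1] at e2
      rw [← ENNReal.toReal_add (measure_ne_top μ _) (measure_ne_top μ _)]
      exact ENNReal.toReal_mono (measure_ne_top μ _) e2
    have hγIoo : Phi a - Phi (-a) ≤ (γ (Ioo (-a) a)).toReal := by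
      have hsing : γ {a} = 0 :=
        gaussianReal_absolutelyContinuous 0 one_ne_zero (volume_singleton)
      have e1 : γ (Iic (-a)) + γ (Ioc (-a) a) = γ (Iic a) := by
        rw [← measure_union (Set.Iic_disjoint_Ioc le_rfl) measurableSet_Ioc,
          Set.Iic_union_Ioc_eq_Iic (by linarith)]
      have e2 : γ (Ioc (-a) a) ≤ γ (Ioo (-a) a) := by
        calc γ (Ioc (-a) a) ≤ γ (Ioo (-a) a ∪ {a}) := by
              refine measure_mono ?_
              rintro x ⟨hx1, hx2⟩
              rcases eq_or_lt_of_le hx2 with h | h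
              · exact Or.inr h
              · exact Or.inl ⟨hx1, h⟩
          _ ≤ γ (Ioo (-a) a) + γ {a} := measure_union_le _ _
          _ = γ (Ioo (-a) a) := by rw [hsing, add_zero]
      have e3 : (γ (Iic a)).toReal = (γ (Iic (-a))).toReal + (γ (Ioc (-a) a)).toReal := by
        rw [← ENNReal.toReal_add (measure_ne_top γ _) (measure_ne_top γ _), e1]
      have e4 : (γ (Ioc (-a) a)).toReal ≤ (γ (Ioo (-a) a)).toReal :=
        ENNReal.toReal_mono (measure_ne_top γ _) e2
      rw [← gauss_Iic, ← gauss_Iic]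
      linarith
    have hc1 := abs_le.mp (hcdf a)
    have hc2 := abs_le.mp (hcdf (-a))
    have hpre : ∀ u : ℝ, {ω | Y ω ≤ u} = Y ⁻¹' Iic u := fun u => rfl
    rw [hpre a] at hc1
    rw [hpre (-a)] at hc2
    have hreal : (μ (Y ⁻¹' Ioo (-a) a)).toReal ≤ (γ (Ioo (-a) a)).toReal + 2*ε := by
      linarith [hc1.1, hc1.2, hc2.1, hc2.2]
    calc μ (Y ⁻¹' Ioo (-a) a)
        = ENNReal.ofReal ((μ (Y ⁻¹' Ioo (-a) a)).toReal) :=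
          (ENNReal.ofReal_toReal (measure_ne_top μ _)).symm
      _ ≤ ENNReal.ofReal ((γ (Ioo (-a) a)).toReal + 2*ε) := ENNReal.ofReal_le_ofReal hreal
      _ = ENNReal.ofReal ((γ (Ioo (-a) a)).toReal) + ENNReal.ofReal (2*ε) :=
          ENNReal.ofReal_add ENNReal.toReal_nonneg (by linarith)
      _ = γ (Ioo (-a) a) + ENNReal.ofReal (2*ε) := by
          rw [ENNReal.ofReal_toReal (measure_ne_top γ _)]
  -- split the t-integral
  have hzero : ∫⁻ t in Ioi (1:ℝ), μ {ω | t < g (Y ω)} = 0 := by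
    rw [setLIntegral_congr_fun measurableSet_Ioi
      (fun t (ht : 1 < t) => ?_), lintegral_zero]
    have : {ω | t < g (Y ω)} = ∅ := by
      ext ω; simp only [mem_setOf_eq, mem_empty_iff_false, iff_false, not_lt]
      exact le_trans (hg_le _) ht.le
    rw [this, measure_empty]
  have hsplit : ∫⁻ t in Ioi (0:ℝ), μ {ω | t < g (Y ω)}
      = ∫⁻ t in Ioc (0:ℝ) 1, μ {ω | t < g (Y ω)} := by
    rw [← Set.Ioc_union_Ioi_eq_Ioi (zero_le_one (α := ℝ)),
      lintegral_union measurableSet_Ioi Set.Ioc_disjoint_Ioi_same, hzero, add_zero]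
  -- main ENNReal estimate
  have main : ∫⁻ ω, ENNReal.ofReal (g (Y ω)) ∂μ
      ≤ ∫⁻ x, ENNReal.ofReal (g x) ∂γ + ENNReal.ofReal (2*ε) := by
    rw [key1, key2, hsplit]
    calc ∫⁻ t in Ioc (0:ℝ) 1, μ {ω | t < g (Y ω)}
        ≤ ∫⁻ t in Ioc (0:ℝ) 1, (γ {x | t < g x} + ENNReal.ofReal (2*ε)) := by
          refine lintegral_mono_ae ((ae_restrict_iff' measurableSet_Ioc).mpr
            (ae_of_all _ slice))
      _ = (∫⁻ t in Ioc (0:ℝ) 1, γ {x | t < g x}) + ENNReal.ofReal (2*ε) := by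
          rw [lintegral_add_right _ measurable_const, setLIntegral_const,
            Real.volume_Ioc]
          norm_num
      _ ≤ (∫⁻ t in Ioi (0:ℝ), γ {x | t < g x}) + ENNReal.ofReal (2*ε) := by
          gcongr
          exact Set.Ioc_subset_Ioi_self
  -- convert to Bochner integrals
  have hγfin : ∫⁻ x, ENNReal.ofReal (g x) ∂γ ≠ ⊤ := by
    refine ne_top_of_le_ne_top (by simp) (le_trans (lintegral_mono fun x => ?_)
      (le_of_eq (lintegral_one)))
    exact ENNReal.ofReal_le_one.mpr (hg_le x)
  have hint1 : ∫ ω, Real.exp (-s * (Y ω)^2) ∂μ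
      = (∫⁻ ω, ENNReal.ofReal (g (Y ω)) ∂μ).toReal := by
    rw [integral_eq_lintegral_of_nonneg_ae (ae_of_all _ fun ω => hg_nn (Y ω))
      hfm.aestronglyMeasurable]
  have hint2 : ∫ x, g x ∂γ = (∫⁻ x, ENNReal.ofReal (g x) ∂γ).toReal := by
    rw [integral_eq_lintegral_of_nonneg_ae (ae_of_all _ hg_nn) hgm.aestronglyMeasurable]
  rw [hint1]
  calc (∫⁻ ω, ENNReal.ofReal (g (Y ω)) ∂μ).toReal
      ≤ (∫⁻ x, ENNReal.ofReal (g x) ∂γ + ENNReal.ofReal (2*ε)).toReal :=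
        ENNReal.toReal_mono (ENNReal.add_ne_top.mpr ⟨hγfin, ENNReal.ofReal_ne_top⟩) main
    _ = (∫⁻ x, ENNReal.ofReal (g x) ∂γ).toReal + 2*ε := by
        rw [ENNReal.toReal_add hγfin ENNReal.ofReal_ne_top,
          ENNReal.toReal_ofReal (by linarith)]
    _ = (1 + 2 * s) ^ (-(1:ℝ) / 2) + 2 * ε := by
        rw [← hint2, hγ]
        rw [gauss_int s hs]
end

section
/- Let μ be a probability distribution on ℝ with mean 0, variance 1 and finite third absolute moment, and let H ∈ ℝ^{m×n} have entries drawn i.i.d. from μ. For every α > 0 and k' > 0 there exist a > 0 and n₀ ∈ ℕ such that for all n ≥ n₀, with m = ⌈αn⌉, and for every vector c ∈ ℝ^n with 0 ≤ c_j ≤ 2 for all j and Σ_{j=1}^n c_j² ≥ k'·n, one has E[ exp(−‖Hc‖²) ] ≤ exp(−a·n·log n). -/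
open MeasureTheory ProbabilityTheory Real Set
open scoped NNReal ENNReal

set_option maxHeartbeats 1000000

section AuxGFEB

lemma nonneg_of_deriv {f f' : ℝ → ℝ} (hf : ∀ x, HasDerivAt f (f' x) x)
    (h0 : f 0 = 0) (hd : ∀ x, 0 ≤ x → 0 ≤ f' x) : ∀ x, 0 ≤ x → 0 ≤ f x := by
  intro x hx
  have hmono : MonotoneOn f (Set.Ici (0:ℝ)) := by
    apply monotoneOn_of_deriv_nonneg (convex_Ici 0)
      (fun y _ => (hf y).continuousAt.continuousWithinAt)
      (fun y _ => ((hf y).differentiableAt).differentiableWithinAt)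
    · intro y hy
      rw [(hf y).deriv]
      exact hd y (le_of_lt (by simpa using hy))
  have := hmono (Set.self_mem_Ici) hx hx
  rwa [h0] at this

lemma one_sub_le_cos {t : ℝ} (ht : 0 ≤ t) : 1 - t ≤ Real.cos t := by
  rcases le_or_gt t 2 with h | h
  · calc 1 - t ≤ 1 - t^2/2 := by nlinarith
    _ ≤ Real.cos t := Real.one_sub_sq_div_two_le_cos
  · calc 1 - t ≤ -1 := by linarith
    _ ≤ Real.cos t := Real.neg_one_le_cos t

lemma sub_sq_le_sin {t : ℝ} (ht : 0 ≤ t) : t - t^2/2 ≤ Real.sin t := by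
  have := nonneg_of_deriv (f := fun t => Real.sin t - t + t^2/2)
    (f' := fun t => Real.cos t - 1 + t)
    (fun x => by
      have : HasDerivAt (fun t : ℝ => Real.sin t - t + t^2/2) (Real.cos x - 1 + (2*x/2)) x := by
        apply HasDerivAt.add
        · exact (Real.hasDerivAt_sin x).sub (hasDerivAt_id x)
        · exact ((hasDerivAt_pow 2 x).div_const 2).congr_deriv (by ring)
      simpa using this.congr_deriv (by ring))
    (by simp)
    (fun x hx => by have := one_sub_le_cos hx; linarith)
  have h := this t ht
  linarith

lemma cos_cube_bound (u : ℝ) : Real.cos u ≤ 1 - u^2/2 + |u|^3/6 := by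
  wlog hu : 0 ≤ u with H
  · have := H (-u) (by linarith [lt_of_not_ge hu])
    simpa using this
  rw [abs_of_nonneg hu]
  have := nonneg_of_deriv (f := fun u => 1 - u^2/2 + u^3/6 - Real.cos u)
    (f' := fun u => -u + u^2/2 + Real.sin u)
    (fun x => by
      have h1 : HasDerivAt (fun u : ℝ => 1 - u^2/2 + u^3/6 - Real.cos u)
          (0 - (2*x/2) + (3*x^2/6) - (-Real.sin x)) x := by
        apply HasDerivAt.sub
        · apply HasDerivAt.add
          · exact (hasDerivAt_const x 1).sub ((hasDerivAt_pow 2 x).div_const 2) |>.congr_deriv (by ring)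
          · exact ((hasDerivAt_pow 3 x).div_const 6).congr_deriv (by ring)
        · exact Real.hasDerivAt_cos x
      exact h1.congr_deriv (by ring))
    (by simp)
    (fun x hx => by have := sub_sq_le_sin hx; linarith)
  have h := this u hu
  linarith

theorem integral_pi_prod {n : ℕ} {E : Fin n → Type*} [∀ i, MeasurableSpace (E i)]
    (μ : ∀ i, Measure (E i)) [∀ i, SigmaFinite (μ i)] {𝕜 : Type*} [RCLike 𝕜]
    (f : (i : Fin n) → E i → 𝕜) :
    ∫ x, ∏ i, f i (x i) ∂Measure.pi μ = ∏ i, ∫ x, f i x ∂(μ i) := by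
  induction n with
  | zero => simp [Measure.pi_empty_univ, measureReal_def]
  | succ n n_ih =>
      calc
        _ = ∫ x : E 0 × ((i : Fin n) → E (Fin.succ i)),
            f 0 x.1 * ∏ i : Fin n, f (Fin.succ i) (x.2 i)
            ∂((μ 0).prod (Measure.pi fun i => μ (Fin.succ i))) := by
          rw [← ((measurePreserving_piFinSuccAbove μ 0).symm).integral_comp']
          simp_rw [MeasurableEquiv.piFinSuccAbove_symm_apply, Fin.insertNthEquiv,
            Fin.prod_univ_succ, Fin.insertNth_zero, Equiv.coe_fn_mk, Fin.cons_succ,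
            Fin.cons_zero]
          rfl
        _ = (∫ x, f 0 x ∂μ 0) * ∏ i : Fin n, ∫ x, f (Fin.succ i) x ∂μ (Fin.succ i) := by
          rw [← n_ih, ← integral_prod_mul]
        _ = _ := by rw [Fin.prod_univ_succ]

section Char
variable {μ : Measure ℝ} [IsProbabilityMeasure μ]

lemma integrable_abs_cube_imp_sq (hthird : Integrable (fun x => |x|^3) μ) :
    Integrable (fun x : ℝ => x^2) μ := by
  refine Integrable.mono' ((integrable_const (1:ℝ)).add hthird) ?_ ?_
  · exact (measurable_id.pow_const 2).aestronglyMeasurable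
  · filter_upwards with x
    have h : x^2 ≤ 1 + |x|^3 := by
      rcases le_or_gt (|x|) 1 with h | h
      · nlinarith [abs_nonneg x, _root_.sq_abs x]
      · nlinarith [abs_nonneg x, _root_.sq_abs x]
    have := abs_nonneg x
    rw [Real.norm_eq_abs, _root_.abs_of_nonneg (sq_nonneg x)]
    simp only [Pi.add_apply]
    exact h

lemma integrable_abs_cube_imp_abs (hthird : Integrable (fun x => |x|^3) μ) :
    Integrable (fun x : ℝ => |x|) μ := by
  refine Integrable.mono' ((integrable_const (1:ℝ)).add (integrable_abs_cube_imp_sq hthird)) ?_ ?_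
  · exact (measurable_id.abs).aestronglyMeasurable
  · filter_upwards with x
    rw [Real.norm_eq_abs, abs_abs]
    have : |x| ≤ 1 + x^2 := by nlinarith [abs_nonneg x, _root_.sq_abs x]
    simpa only [Pi.add_apply] using this

lemma integrable_cexp (w : ℝ) : Integrable (fun x : ℝ => Complex.exp (w * x * Complex.I)) μ := by
  refine Integrable.mono' (integrable_const (1:ℝ)) ?_ ?_
  · apply Continuous.aestronglyMeasurable
    exact Complex.continuous_exp.comp (by continuity)
  · filter_upwards with x
    rw [show ((w:ℂ) * (x:ℂ) * Complex.I) = ((w*x : ℝ) : ℂ) * Complex.I by push_cast; ring,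
      Complex.norm_exp]
    simp

lemma charBound (hmean : (∫ x, x ∂μ) = 0) (hvar : (∫ x, x^2 ∂μ) = 1)
    (hthird : Integrable (fun x => |x|^3) μ) {w : ℝ}
    (hw : |w| * (2 * (∫ x, |x|^3 ∂μ) + 6) ≤ 3) :
    ‖∫ x, Complex.exp (w * x * Complex.I) ∂μ‖ ≤ Real.exp (-(w^2/4)) := by
  set ρ : ℝ := ∫ x, |x|^3 ∂μ with hρ
  have hρ0 : 0 ≤ ρ := integral_nonneg (fun x => by positivity)
  have hsq := integrable_abs_cube_imp_sq (μ := μ) hthird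
  have habs := integrable_abs_cube_imp_abs (μ := μ) hthird
  have hm1 : (∫ x, |x| ∂μ) ≤ 1 := by
    have : (∫ x, |x| ∂μ) ≤ ∫ x, (1 + x^2)/2 ∂μ := by
      apply integral_mono habs (((integrable_const (1:ℝ)).add hsq).div_const 2)
      intro x; simp only [Pi.add_apply, Pi.div_apply]
      nlinarith [_root_.sq_abs x, abs_nonneg x, sq_nonneg (|x| - 1)]
    rwa [integral_div, integral_add (integrable_const 1) hsq, hvar, integral_const,
      measureReal_def, measure_univ, ENNReal.toReal_one, smul_eq_mul, mul_one, show ((1:ℝ)+1)/2 = 1 by norm_num] at this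
  have hm1' : (0:ℝ) ≤ ∫ x, |x| ∂μ := integral_nonneg (fun x => abs_nonneg x)
  set z : ℂ := ∫ x, Complex.exp (w * x * Complex.I) ∂μ with hz
  -- step 1 : ‖z‖^2 = ∫∫ cos (w(x-y))
  have hconj : (starRingEnd ℂ) z = ∫ x, Complex.exp (-(w * x * Complex.I)) ∂μ := by
    rw [hz, ← integral_conj]
    congr 1; ext x
    rw [← Complex.exp_conj]; congr 1
    simp [Complex.conj_I]
    try ring
  have key : (‖z‖:ℝ)^2 = ∫ p, Real.cos (w * (p.1 - p.2)) ∂(μ.prod μ) := by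
    have h1 : (z * (starRingEnd ℂ) z) = ∫ p, Complex.exp (w * p.1 * Complex.I) *
        Complex.exp (-(w * p.2 * Complex.I)) ∂(μ.prod μ) := by
      rw [hconj, hz, ← integral_prod_mul]
    have h2 : ∀ p : ℝ × ℝ, Complex.exp (w * p.1 * Complex.I) * Complex.exp (-(w * p.2 * Complex.I))
        = Complex.exp (((w * (p.1 - p.2) : ℝ) : ℂ) * Complex.I) := by
      intro p; rw [← Complex.exp_add]; congr 1; push_cast; ring
    have h3 : (‖z‖:ℝ)^2 = (z * (starRingEnd ℂ) z).re := by
      rw [Complex.mul_conj, Complex.ofReal_re, Complex.normSq_eq_norm_sq]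
    rw [h3, h1]
    have hint : Integrable (fun p : ℝ × ℝ => Complex.exp (w * p.1 * Complex.I) *
        Complex.exp (-(w * p.2 * Complex.I))) (μ.prod μ) := by
      simp_rw [h2]
      refine Integrable.mono' (integrable_const (1:ℝ)) ?_ ?_
      · apply Continuous.aestronglyMeasurable
        exact Complex.continuous_exp.comp (by continuity)
      · filter_upwards with p
        rw [Complex.norm_exp]
        simp
    rw [show (∫ p : ℝ × ℝ, Complex.exp (w * p.1 * Complex.I) *
        Complex.exp (-(w * p.2 * Complex.I)) ∂(μ.prod μ)).re
      = RCLike.re (∫ p : ℝ × ℝ, Complex.exp (w * p.1 * Complex.I) *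
        Complex.exp (-(w * p.2 * Complex.I)) ∂(μ.prod μ)) from rfl, ← integral_re hint]
    congr 1; ext p
    rw [h2 p]
    have := Complex.exp_ofReal_mul_I_re (w * (p.1 - p.2))
    simpa using this
  -- step 2 : bound the cos integral
  have step2 : (∫ p, Real.cos (w * (p.1 - p.2)) ∂(μ.prod μ)) ≤ 1 - w^2 + |w|^3 * (2*ρ+6)/6 := by
    have hsq1 : Integrable (fun p : ℝ × ℝ => p.1^2) (μ.prod μ) := by
      simpa using (hsq.mul_prod (integrable_const (1:ℝ)))
    have hsq2 : Integrable (fun p : ℝ × ℝ => p.2^2) (μ.prod μ) := by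
      simpa using ((integrable_const (1:ℝ)).mul_prod hsq)
    have hmul : Integrable (fun p : ℝ × ℝ => p.1 * p.2) (μ.prod μ) := by
      refine (habs.mul_prod habs).mono'
        ((measurable_fst.mul measurable_snd).aestronglyMeasurable) ?_
      filter_upwards with p
      rw [Real.norm_eq_abs, abs_mul]
    have hc1 : Integrable (fun p : ℝ × ℝ => |p.1|^3) (μ.prod μ) := by
      simpa using (hthird.mul_prod (integrable_const (1:ℝ)))
    have hc2 : Integrable (fun p : ℝ × ℝ => |p.2|^3) (μ.prod μ) := by
      simpa using ((integrable_const (1:ℝ)).mul_prod hthird)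
    have hc3 : Integrable (fun p : ℝ × ℝ => p.1^2 * |p.2|) (μ.prod μ) := hsq.mul_prod habs
    have hc4 : Integrable (fun p : ℝ × ℝ => |p.1| * p.2^2) (μ.prod μ) := habs.mul_prod hsq
    have h2mul : Integrable (fun p : ℝ × ℝ => 2*(p.1*p.2)) (μ.prod μ) := hmul.const_mul 2
    have h3c3 : Integrable (fun p : ℝ × ℝ => 3*(p.1^2 * |p.2|)) (μ.prod μ) := hc3.const_mul 3
    have h3c4 : Integrable (fun p : ℝ × ℝ => 3*(|p.1| * p.2^2)) (μ.prod μ) := hc4.const_mul 3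
    have hA1 : Integrable (fun p : ℝ × ℝ => p.1^2 - 2*(p.1*p.2)) (μ.prod μ) := hsq1.sub h2mul
    have hA : Integrable (fun p : ℝ × ℝ => p.1^2 - 2*(p.1*p.2) + p.2^2) (μ.prod μ) :=
      hA1.add hsq2
    have hB1 : Integrable (fun p : ℝ × ℝ => |p.1|^3 + 3*(p.1^2 * |p.2|)) (μ.prod μ) :=
      hc1.add h3c3
    have hB2 : Integrable (fun p : ℝ × ℝ =>
        |p.1|^3 + 3*(p.1^2 * |p.2|) + 3*(|p.1| * p.2^2)) (μ.prod μ) := hB1.add h3c4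
    have hB : Integrable (fun p : ℝ × ℝ =>
        |p.1|^3 + 3*(p.1^2 * |p.2|) + 3*(|p.1| * p.2^2) + |p.2|^3) (μ.prod μ) := hB2.add hc2
    have hAc : Integrable (fun p : ℝ × ℝ =>
        w^2/2 * (p.1^2 - 2*(p.1*p.2) + p.2^2)) (μ.prod μ) := hA.const_mul (w^2/2)
    have hBc : Integrable (fun p : ℝ × ℝ =>
        |w|^3/6 * (|p.1|^3 + 3*(p.1^2 * |p.2|) + 3*(|p.1| * p.2^2) + |p.2|^3)) (μ.prod μ) :=
      hB.const_mul (|w|^3/6)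
    have hG1 : Integrable (fun p : ℝ × ℝ =>
        1 - w^2/2 * (p.1^2 - 2*(p.1*p.2) + p.2^2)) (μ.prod μ) := (integrable_const 1).sub hAc
    have hG : Integrable (fun p : ℝ × ℝ =>
        1 - w^2/2 * (p.1^2 - 2*(p.1*p.2) + p.2^2)
        + |w|^3/6 * (|p.1|^3 + 3*(p.1^2 * |p.2|) + 3*(|p.1| * p.2^2) + |p.2|^3)) (μ.prod μ) :=
      hG1.add hBc
    have hcosint : Integrable (fun p : ℝ × ℝ => Real.cos (w * (p.1 - p.2))) (μ.prod μ) := by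
      refine Integrable.mono' (integrable_const (1:ℝ)) ?_ ?_
      · exact (Real.continuous_cos.comp (continuous_const.mul (continuous_fst.sub continuous_snd))).aestronglyMeasurable
      · filter_upwards with p
        rw [Real.norm_eq_abs]
        exact Real.abs_cos_le_one _
    have hle : (∫ p, Real.cos (w * (p.1 - p.2)) ∂(μ.prod μ)) ≤ ∫ p : ℝ × ℝ,
        (1 - w^2/2 * (p.1^2 - 2*(p.1*p.2) + p.2^2)
        + |w|^3/6 * (|p.1|^3 + 3*(p.1^2 * |p.2|) + 3*(|p.1| * p.2^2) + |p.2|^3)) ∂(μ.prod μ) := by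
      apply integral_mono hcosint hG
      intro p; dsimp only
      have h1 := cos_cube_bound (w * (p.1 - p.2))
      have h2 : |w * (p.1 - p.2)|^3 ≤ |w|^3 * (|p.1|^3 + 3*(p.1^2 * |p.2|) + 3*(|p.1| * p.2^2) + |p.2|^3) := by
        rw [abs_mul, mul_pow]
        have h3 : |p.1 - p.2| ≤ |p.1| + |p.2| := abs_sub p.1 p.2
        have h4 : |p.1 - p.2|^3 ≤ (|p.1| + |p.2|)^3 :=
          pow_le_pow_left₀ (abs_nonneg _) h3 3
        have h5 : (|p.1| + |p.2|)^3 = |p.1|^3 + 3*(p.1^2 * |p.2|) + 3*(|p.1| * p.2^2) + |p.2|^3 := by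
          rw [← _root_.sq_abs p.1, ← _root_.sq_abs p.2]; ring
        nlinarith [pow_nonneg (abs_nonneg w) 3]
      have h6 : (w * (p.1 - p.2))^2 = w^2 * (p.1^2 - 2*(p.1*p.2) + p.2^2) := by ring
      nlinarith [pow_nonneg (abs_nonneg w) 3]
    have c1 : (∫ p : ℝ × ℝ, p.1^2 ∂(μ.prod μ)) = 1 := by
      have := integral_prod_mul (μ := μ) (ν := μ) (fun x => x^2) (fun _ => (1:ℝ))
      simpa [hvar] using this
    have c2 : (∫ p : ℝ × ℝ, p.2^2 ∂(μ.prod μ)) = 1 := by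
      have := integral_prod_mul (μ := μ) (ν := μ) (fun _ => (1:ℝ)) (fun y => y^2)
      simpa [hvar] using this
    have c3 : (∫ p : ℝ × ℝ, p.1 * p.2 ∂(μ.prod μ)) = 0 := by
      have := integral_prod_mul (μ := μ) (ν := μ) (fun x => x) (fun y => y)
      simpa [hmean] using this
    have c4 : (∫ p : ℝ × ℝ, |p.1|^3 ∂(μ.prod μ)) = ρ := by
      have := integral_prod_mul (μ := μ) (ν := μ) (fun x => |x|^3) (fun _ => (1:ℝ))
      simpa using this
    have c5 : (∫ p : ℝ × ℝ, |p.2|^3 ∂(μ.prod μ)) = ρ := by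
      have := integral_prod_mul (μ := μ) (ν := μ) (fun _ => (1:ℝ)) (fun y => |y|^3)
      simpa using this
    have c6 : (∫ p : ℝ × ℝ, p.1^2 * |p.2| ∂(μ.prod μ)) = ∫ x, |x| ∂μ := by
      have := integral_prod_mul (μ := μ) (ν := μ) (fun x => x^2) (fun y => |y|)
      simpa [hvar] using this
    have c7 : (∫ p : ℝ × ℝ, |p.1| * p.2^2 ∂(μ.prod μ)) = ∫ x, |x| ∂μ := by
      have := integral_prod_mul (μ := μ) (ν := μ) (fun x => |x|) (fun y => y^2)
      simpa [hvar] using this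
    have iA : (∫ p : ℝ × ℝ, (p.1^2 - 2*(p.1*p.2) + p.2^2) ∂(μ.prod μ)) = 2 := by
      rw [integral_add hA1 hsq2, integral_sub hsq1 h2mul, integral_const_mul _ _, c1, c2, c3]
      norm_num
    have iB : (∫ p : ℝ × ℝ,
        (|p.1|^3 + 3*(p.1^2 * |p.2|) + 3*(|p.1| * p.2^2) + |p.2|^3) ∂(μ.prod μ))
        = 2*ρ + 6*(∫ x, |x| ∂μ) := by
      rw [integral_add hB2 hc2, integral_add hB1 h3c4, integral_add hc1 h3c3,
        integral_const_mul _ _, integral_const_mul _ _, c4, c5, c6, c7]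
      ring
    have iG : (∫ p : ℝ × ℝ,
        (1 - w^2/2 * (p.1^2 - 2*(p.1*p.2) + p.2^2)
        + |w|^3/6 * (|p.1|^3 + 3*(p.1^2 * |p.2|) + 3*(|p.1| * p.2^2) + |p.2|^3)) ∂(μ.prod μ))
        = 1 - w^2/2 * 2 + |w|^3/6 * (2*ρ + 6*(∫ x, |x| ∂μ)) := by
      rw [integral_add hG1 hBc, integral_sub (integrable_const 1) hAc,
        integral_const_mul _ _, integral_const_mul _ _, iA, iB, integral_const, measureReal_def, measure_univ]
      simp
    rw [iG] at hle
    have : |w|^3/6 * (2*ρ + 6*(∫ x, |x| ∂μ)) ≤ |w|^3 * (2*ρ+6)/6 := by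
      have h9 : (0:ℝ) ≤ |w|^3 := pow_nonneg (abs_nonneg w) 3
      nlinarith
    linarith
  -- step 3: conclude
  have hb : (‖z‖:ℝ)^2 ≤ 1 - w^2/2 := by
    rw [key]
    have h7 : |w|^3 * (2*ρ+6)/6 ≤ w^2/2 := by
      have h8 : |w|^3 = w^2 * |w| := by rw [← sq_abs]; ring
      rw [h8]
      have := mul_le_mul_of_nonneg_left hw (sq_nonneg w)
      nlinarith [sq_nonneg w]
    linarith [step2]
  have hb2 : (‖z‖:ℝ)^2 ≤ Real.exp (-(w^2/2)) := by
    have := Real.add_one_le_exp (-(w^2/2))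
    linarith
  have hexp : Real.exp (-(w^2/2)) = (Real.exp (-(w^2/4)))^2 := by
    have h : (-(w^2/4)) + (-(w^2/4)) = -(w^2/2) := by ring
    rw [← h, Real.exp_add]
    ring
  nlinarith [norm_nonneg z, Real.exp_pos (-(w^2/4)), sq_nonneg (‖z‖ - Real.exp (-(w^2/4))), sq_nonneg (‖z‖ + Real.exp (-(w^2/4)))]

end Char

section Row
variable {μ : Measure ℝ} [IsProbabilityMeasure μ]

lemma integrable_bounded_cexp {α : Type*} [MeasurableSpace α] (ν : Measure α)
    [IsFiniteMeasure ν] {g : α → ℝ} (hg : Measurable g) :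
    Integrable (fun a => Complex.exp (g a * Complex.I)) ν := by
  refine Integrable.mono' (integrable_const (1:ℝ)) ?_ ?_
  · apply Measurable.aestronglyMeasurable
    exact Complex.measurable_exp.comp ((Complex.measurable_ofReal.comp hg).mul measurable_const)
  · filter_upwards with a
    rw [Complex.norm_exp]
    simp

lemma measurable_S {n : ℕ} (c : Fin n → ℝ) :
    Measurable (fun x : Fin n → ℝ => ∑ j, x j * c j) := by
  apply Finset.measurable_sum
  intro j _
  exact (measurable_pi_apply j).mul_const _

lemma psi_bound (hmean : (∫ x, x ∂μ) = 0) (hvar : (∫ x, x^2 ∂μ) = 1)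
    (hthird : Integrable (fun x => |x|^3) μ) {n : ℕ} (c : Fin n → ℝ)
    (hc : ∀ j, 0 ≤ c j ∧ c j ≤ 2) {u : ℝ} (x₀ : ℝ)
    (hu : |u| * (2 * (2 * (∫ x, |x|^3 ∂μ) + 6)) ≤ 3) :
    (∫ x : Fin n → ℝ, Real.cos (u * ((∑ j, x j * c j) - x₀)) ∂(Measure.pi fun _ => μ))
      ≤ Real.exp (-(u^2 * (∑ j, (c j)^2) / 4)) := by
  set ρ : ℝ := ∫ x, |x|^3 ∂μ with hρ
  have hρ0 : 0 ≤ ρ := integral_nonneg (fun x => by positivity)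
  set ν : Measure (Fin n → ℝ) := Measure.pi fun _ => μ with hν
  haveI : IsProbabilityMeasure ν := by rw [hν]; infer_instance
  set S : (Fin n → ℝ) → ℝ := fun x => ∑ j, x j * c j with hS
  have hSmeas : Measurable S := measurable_S c
  -- the complex integral
  set z : ℂ := ∫ x, Complex.exp ((u * (S x - x₀) : ℝ) * Complex.I) ∂ν with hz
  have hint : Integrable (fun x => Complex.exp ((u * (S x - x₀) : ℝ) * Complex.I)) ν :=
    integrable_bounded_cexp ν (by measurability)
  have hre : (∫ x, Real.cos (u * (S x - x₀)) ∂ν) = z.re := by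
    rw [hz, show (∫ x, Complex.exp ((u * (S x - x₀) : ℝ) * Complex.I) ∂ν).re
      = RCLike.re (∫ x, Complex.exp ((u * (S x - x₀) : ℝ) * Complex.I) ∂ν) from rfl,
      ← integral_re hint]
    congr 1; ext x
    have := Complex.exp_ofReal_mul_I_re (u * (S x - x₀))
    simpa using this.symm
  have hzle : z.re ≤ ‖z‖ := Complex.re_le_norm z
  -- factorize ‖z‖
  have hfact : ‖z‖ ≤ Real.exp (-(u^2 * (∑ j, (c j)^2) / 4)) := by
    have hsplit : ∀ x : Fin n → ℝ, Complex.exp ((u * (S x - x₀) : ℝ) * Complex.I)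
        = Complex.exp ((-(u * x₀) : ℝ) * Complex.I) * ∏ j, Complex.exp ((u * c j : ℝ) * (x j : ℝ) * Complex.I) := by
      intro x
      rw [← Complex.exp_sum, ← Complex.exp_add]
      congr 1
      push_cast
      rw [hS]
      push_cast
      have hsum : ((u:ℂ) * ∑ j, (x j:ℂ) * (c j:ℂ)) * Complex.I
          = ∑ j, (u:ℂ) * (c j:ℂ) * (x j:ℂ) * Complex.I := by
        rw [Finset.mul_sum, Finset.sum_mul]
        exact Finset.sum_congr rfl (fun j _ => by ring)
      rw [mul_sub, sub_mul, hsum]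
      ring
    have : z = Complex.exp ((-(u * x₀) : ℝ) * Complex.I)
        * ∏ j, ∫ x : ℝ, Complex.exp ((u * c j : ℝ) * (x:ℝ) * Complex.I) ∂μ := by
      rw [hz]
      simp_rw [hsplit]
      rw [integral_const_mul]
      congr 1
      exact integral_pi_prod (fun _ => μ) (fun j y => Complex.exp ((u * c j : ℝ) * (y:ℝ) * Complex.I))
    rw [this, norm_mul, norm_prod]
    have h1 : ‖Complex.exp ((-(u * x₀) : ℝ) * Complex.I)‖ = 1 := by
      rw [Complex.norm_exp]; simp
    rw [h1, one_mul]
    have h2 : ∀ j : Fin n, ‖∫ x : ℝ, Complex.exp ((u * c j : ℝ) * (x:ℝ) * Complex.I) ∂μ‖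
        ≤ Real.exp (-((u * c j)^2/4)) := by
      intro j
      apply charBound hmean hvar hthird
      have hcj := hc j
      have : |u * c j| ≤ |u| * 2 := by
        rw [abs_mul, abs_of_nonneg hcj.1]
        have := hcj.2
        nlinarith [abs_nonneg u]
      calc |u * c j| * (2*ρ+6) ≤ (|u| * 2) * (2*ρ+6) := by
            apply mul_le_mul_of_nonneg_right this (by linarith)
        _ ≤ 3 := by
            rw [show |u| * 2 * (2*ρ+6) = |u| * (2*(2*ρ+6)) from by ring]
            exact hu
    calc ∏ j, ‖∫ x : ℝ, Complex.exp ((u * c j : ℝ) * (x:ℝ) * Complex.I) ∂μ‖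
        ≤ ∏ j, Real.exp (-((u * c j)^2/4)) :=
          Finset.prod_le_prod (fun j _ => norm_nonneg _) (fun j _ => h2 j)
      _ = Real.exp (∑ j, -((u * c j)^2/4)) := (Real.exp_sum _ _).symm
      _ = Real.exp (-(u^2 * (∑ j, (c j)^2) / 4)) := by
          congr 1
          rw [Finset.mul_sum, Finset.sum_div, ← Finset.sum_neg_distrib]
          exact Finset.sum_congr rfl (fun j _ => by ring)
  rw [hre]
  exact hzle.trans hfact

end Row

noncomputable def Kker (L v : ℝ) : ℝ := ∫ t in Set.Ioc (-L) L, Real.cos (t * v)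

lemma Kker_formula {L : ℝ} (hL : 0 < L) (v : ℝ) :
    Kker L v = if v = 0 then 2*L else 2 * Real.sin (L*v) / v := by
  rcases eq_or_ne v 0 with hv | hv
  · simp only [hv, if_true, Kker, mul_zero, Real.cos_zero]
    rw [setIntegral_const]
    simp [Real.volume_Ioc, measureReal_def]
    rw [show L + L = 2*L by ring, ENNReal.toReal_ofReal (by linarith)]
  · simp only [hv, if_false, Kker]
    rw [← intervalIntegral.integral_of_le (by linarith : -L ≤ L)]
    rw [intervalIntegral.integral_comp_mul_right (fun y => Real.cos y) hv]
    rw [integral_cos, smul_eq_mul, show -L * v = -(L*v) by ring, Real.sin_neg]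
    field_simp
    ring
lemma Kker_measurable {L : ℝ} (hL : 0 < L) : Measurable (Kker L) := by
  have : Kker L = fun v => if v = 0 then 2*L else 2 * Real.sin (L*v) / v := by
    ext v; exact Kker_formula hL v
  rw [this]
  apply Measurable.ite
  · exact measurableSet_eq
  · exact measurable_const
  · apply Measurable.div
    · exact (Real.continuous_sin.comp (continuous_const.mul continuous_id)).measurable.const_mul 2
    · exact measurable_id
lemma Kker_le {L : ℝ} (hL : 0 < L) (v : ℝ) : |Kker L v| ≤ 2*L := by
  have h := norm_setIntegral_le_of_norm_le_const (s := Set.Ioc (-L) L)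
    (μ := volume) (C := 1) (f := fun t => Real.cos (t * v)) measure_Ioc_lt_top
    (fun t _ => by rw [Real.norm_eq_abs]; exact Real.abs_cos_le_one _)
  · rw [Real.norm_eq_abs] at h
    calc |Kker L v| ≤ 1 * (volume (Set.Ioc (-L) L)).toReal := h
      _ = 2*L := by
        rw [one_mul, Real.volume_Ioc, show L - (-L) = 2*L by ring,
          ENNReal.toReal_ofReal (by linarith)]
lemma Kker_lower {L : ℝ} (hL : 0 < L) {v : ℝ} (hv : |v| ≤ 1/L) : L ≤ Kker L v := by
  have hmono : (∫ t in Set.Ioc (-L) L, (1/2 : ℝ)) ≤ Kker L v := by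
    apply setIntegral_mono_on
    · exact integrableOn_const measure_Ioc_lt_top.ne
    · exact (Real.continuous_cos.comp (continuous_id.mul continuous_const)).integrableOn_Ioc
    · exact measurableSet_Ioc
    · intro t ht
      have h1 : |t| ≤ L := by
        rcases ht with ⟨h2, h3⟩
        rw [abs_le]; constructor <;> linarith
      have h2 : |t * v| ≤ 1 := by
        rw [abs_mul]
        calc |t| * |v| ≤ L * (1/L) := by
              apply mul_le_mul h1 hv (abs_nonneg v) (by linarith)
          _ = 1 := by field_simp
      have := Real.one_sub_sq_div_two_le_cos (x := t * v)
      have h3 : (t*v)^2 ≤ 1 := by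
        nlinarith [sq_abs (t*v), abs_nonneg (t*v)]
      linarith
  calc L = (1/2) * (2*L) := by ring
    _ = ∫ t in Set.Ioc (-L) L, (1/2 : ℝ) := by
        rw [setIntegral_const, measureReal_def, Real.volume_Ioc, show L - (-L) = 2*L by ring,
          ENNReal.toReal_ofReal (by linarith), smul_eq_mul]
        ring
    _ ≤ Kker L v := hmono




section RowK
variable {μ : Measure ℝ} [IsProbabilityMeasure μ]

lemma integrable_cos_mul {α : Type*} [MeasurableSpace α] (ν : Measure α) [IsFiniteMeasure ν]
    {V : α → ℝ} (hV : Measurable V) (u : ℝ) :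
    Integrable (fun x => Real.cos (u * V x)) ν := by
  refine Integrable.mono' (integrable_const (1:ℝ)) ?_ ?_
  · exact (Real.continuous_cos.measurable.comp (measurable_const.mul hV)).aestronglyMeasurable
  · filter_upwards with x
    rw [Real.norm_eq_abs]
    exact Real.abs_cos_le_one _

lemma rowK_bound (hmean : (∫ x, x ∂μ) = 0) (hvar : (∫ x, x^2 ∂μ) = 1)
    (hthird : Integrable (fun x => |x|^3) μ) {n : ℕ} (c : Fin n → ℝ)
    (hc : ∀ j, 0 ≤ c j ∧ c j ≤ 2) (x₀ : ℝ) {L : ℝ} (hL : 0 < L)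
    (hLsmall : 2*L * (2 * (2 * (∫ x, |x|^3 ∂μ) + 6)) ≤ 3)
    (hσ : 0 < ∑ j, (c j)^2) :
    (∫ x : Fin n → ℝ, (Kker L ((∑ j, x j * c j) - x₀))^2 ∂(Measure.pi fun _ => μ))
      ≤ 2*L * Real.sqrt (π / ((∑ j, (c j)^2)/4)) := by
  set ρ : ℝ := ∫ x, |x|^3 ∂μ with hρ
  set σ2 : ℝ := ∑ j, (c j)^2 with hσ2
  set b : ℝ := σ2/4 with hb
  have hbpos : 0 < b := by rw [hb]; linarith
  set ν : Measure (Fin n → ℝ) := Measure.pi fun _ => μ with hν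
  haveI : IsProbabilityMeasure ν := by rw [hν]; infer_instance
  set V : (Fin n → ℝ) → ℝ := fun x => (∑ j, x j * c j) - x₀ with hVdef
  have hV : Measurable V := (measurable_S c).sub measurable_const
  set mL : Measure ℝ := volume.restrict (Set.Ioc (-L) L) with hmL
  haveI : IsFiniteMeasure mL := by
    constructor
    rw [hmL, Measure.restrict_apply_univ]
    exact measure_Ioc_lt_top
  set P : Measure (ℝ × ℝ) := mL.prod mL with hP
  haveI : IsFiniteMeasure P := by rw [hP]; infer_instance
  -- pointwise rewriting of the square
  have step1 : ∀ x : Fin n → ℝ, (Kker L (V x))^2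
      = ∫ p, Real.cos (p.1 * V x) * Real.cos (p.2 * V x) ∂P := by
    intro x
    rw [sq]
    exact (integral_prod_mul (μ := mL) (ν := mL)
      (fun t => Real.cos (t * V x)) (fun t => Real.cos (t * V x))).symm
  have hF : Measurable (fun q : (Fin n → ℝ) × (ℝ × ℝ) =>
      Real.cos (q.2.1 * V q.1) * Real.cos (q.2.2 * V q.1)) := by
    apply Measurable.mul
    · exact Real.continuous_cos.measurable.comp
        ((measurable_snd.fst).mul (hV.comp measurable_fst))
    · exact Real.continuous_cos.measurable.comp
        ((measurable_snd.snd).mul (hV.comp measurable_fst))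
  have hFint : Integrable (Function.uncurry fun x p =>
      Real.cos (p.1 * V x) * Real.cos (p.2 * V x)) (ν.prod P) := by
    refine Integrable.mono' (integrable_const (1:ℝ)) ?_ ?_
    · exact hF.aestronglyMeasurable
    · filter_upwards with q
      simp only [Function.uncurry]
      rw [Real.norm_eq_abs, abs_mul]
      calc |Real.cos (q.2.1 * V q.1)| * |Real.cos (q.2.2 * V q.1)|
          ≤ 1 * 1 := mul_le_mul (Real.abs_cos_le_one _) (Real.abs_cos_le_one _)
            (abs_nonneg _) zero_le_one
        _ = 1 := by ring
  -- swap
  have step2 : (∫ x, (Kker L (V x))^2 ∂ν)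
      = ∫ p, (∫ x, Real.cos (p.1 * V x) * Real.cos (p.2 * V x) ∂ν) ∂P := by
    have := integral_integral_swap (μ := ν) (ν := P)
      (f := fun x p => Real.cos (p.1 * V x) * Real.cos (p.2 * V x)) hFint
    rw [← this]
    congr 1
    ext x
    exact step1 x
  rw [step2]
  -- bound the inner integral a.e.
  set G : ℝ × ℝ → ℝ := fun p =>
    (Real.exp (-(b * (p.1+p.2)^2)) + Real.exp (-(b * (p.1-p.2)^2)))/2 with hG
  have hinner_le : ∀ p : ℝ × ℝ, p ∈ (Set.Ioc (-L) L) ×ˢ (Set.Ioc (-L) L) →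
      (∫ x, Real.cos (p.1 * V x) * Real.cos (p.2 * V x) ∂ν) ≤ G p := by
    intro p hp
    have hp1 : |p.1| ≤ L := by
      rcases hp.1 with ⟨h1, h2⟩; rw [abs_le]; constructor <;> linarith
    have hp2 : |p.2| ≤ L := by
      rcases hp.2 with ⟨h1, h2⟩; rw [abs_le]; constructor <;> linarith
    have hpt : ∀ x, Real.cos (p.1 * V x) * Real.cos (p.2 * V x)
        = (Real.cos ((p.1+p.2) * V x) + Real.cos ((p.1-p.2) * V x))/2 := by
      intro x
      rw [add_mul, sub_mul, Real.cos_add, Real.cos_sub]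
      ring
    have heq : (∫ x, Real.cos (p.1 * V x) * Real.cos (p.2 * V x) ∂ν)
        = ((∫ x, Real.cos ((p.1+p.2) * V x) ∂ν) + ∫ x, Real.cos ((p.1-p.2) * V x) ∂ν)/2 := by
      simp_rw [hpt]
      rw [integral_div, integral_add (integrable_cos_mul ν hV _) (integrable_cos_mul ν hV _)]
    rw [heq]
    have hbnd : ∀ u : ℝ, |u| ≤ 2*L →
        (∫ x, Real.cos (u * V x) ∂ν) ≤ Real.exp (-(b * u^2)) := by
      intro u hu
      have hsmall : |u| * (2 * (2 * (∫ x, |x|^3 ∂μ) + 6)) ≤ 3 := by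
        calc |u| * (2 * (2 * (∫ x, |x|^3 ∂μ) + 6)) ≤ (2*L) * (2 * (2 * (∫ x, |x|^3 ∂μ) + 6)) := by
              apply mul_le_mul_of_nonneg_right hu
              have : (0:ℝ) ≤ ∫ x, |x|^3 ∂μ := integral_nonneg (fun x => by positivity)
              positivity
          _ ≤ 3 := hLsmall
      have h := psi_bound hmean hvar hthird c hc (u := u) x₀ hsmall
      have harg : -(u^2 * (∑ j, (c j)^2) / 4) = -(b * u^2) := by rw [hb, hσ2]; ring
      rw [harg] at h
      exact h
    have h1 := hbnd (p.1+p.2) (by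
      calc |p.1+p.2| ≤ |p.1| + |p.2| := abs_add_le _ _
        _ ≤ 2*L := by linarith)
    have h2 := hbnd (p.1-p.2) (by
      calc |p.1-p.2| ≤ |p.1| + |p.2| := abs_sub _ _
        _ ≤ 2*L := by linarith)
    rw [hG]
    dsimp only
    linarith
  have hinner_meas : AEStronglyMeasurable
      (fun p : ℝ × ℝ => ∫ x, Real.cos (p.1 * V x) * Real.cos (p.2 * V x) ∂ν) P := by
    have : StronglyMeasurable (fun p : ℝ × ℝ =>
        ∫ x, Real.cos (p.1 * V x) * Real.cos (p.2 * V x) ∂ν) := by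
      apply MeasureTheory.StronglyMeasurable.integral_prod_right'
        (f := fun q : (ℝ × ℝ) × (Fin n → ℝ) =>
          Real.cos (q.1.1 * V q.2) * Real.cos (q.1.2 * V q.2))
      apply Measurable.stronglyMeasurable
      apply Measurable.mul
      · exact Real.continuous_cos.measurable.comp
          ((measurable_fst.fst).mul (hV.comp measurable_snd))
      · exact Real.continuous_cos.measurable.comp
          ((measurable_fst.snd).mul (hV.comp measurable_snd))
    exact this.aestronglyMeasurable
  have hinner_int : Integrable
      (fun p : ℝ × ℝ => ∫ x, Real.cos (p.1 * V x) * Real.cos (p.2 * V x) ∂ν) P := by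
    refine Integrable.mono' (integrable_const (1:ℝ)) hinner_meas ?_
    filter_upwards with p
    have h := norm_integral_le_of_norm_le_const (μ := ν) (C := 1)
      (f := fun x => Real.cos (p.1 * V x) * Real.cos (p.2 * V x)) (by
        filter_upwards with x
        rw [Real.norm_eq_abs, abs_mul]
        calc |Real.cos (p.1 * V x)| * |Real.cos (p.2 * V x)| ≤ 1 * 1 :=
            mul_le_mul (Real.abs_cos_le_one _) (Real.abs_cos_le_one _)
              (abs_nonneg _) zero_le_one
          _ = 1 := by ring)
    simpa using h
  have hGmeas : Measurable G := by
    apply Measurable.div ?_ measurable_const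
    apply Measurable.add
    · exact (Real.continuous_exp.measurable).comp
        ((((measurable_fst.add measurable_snd).pow_const 2).const_mul b).neg)
    · exact (Real.continuous_exp.measurable).comp
        ((((measurable_fst.sub measurable_snd).pow_const 2).const_mul b).neg)
  have hGint : Integrable G P := by
    refine Integrable.mono' (integrable_const (1:ℝ)) hGmeas.aestronglyMeasurable ?_
    filter_upwards with p
    rw [Real.norm_eq_abs, hG]
    dsimp only
    have e1 : Real.exp (-(b * (p.1+p.2)^2)) ≤ 1 := Real.exp_le_one_iff.2 (neg_nonpos.2 (by positivity))
    have e2 : Real.exp (-(b * (p.1-p.2)^2)) ≤ 1 := Real.exp_le_one_iff.2 (neg_nonpos.2 (by positivity))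
    have e3 : (0:ℝ) < Real.exp (-(b * (p.1+p.2)^2)) := Real.exp_pos _
    have e4 : (0:ℝ) < Real.exp (-(b * (p.1-p.2)^2)) := Real.exp_pos _
    rw [abs_of_nonneg (by positivity)]
    linarith
  have hae : ∀ᵐ p ∂P, (∫ x, Real.cos (p.1 * V x) * Real.cos (p.2 * V x) ∂ν) ≤ G p := by
    have hPs : P = (volume.prod volume).restrict ((Set.Ioc (-L) L) ×ˢ (Set.Ioc (-L) L)) := by
      rw [hP, hmL, Measure.prod_restrict]
    rw [hPs]
    filter_upwards [ae_restrict_mem (measurableSet_Ioc.prod measurableSet_Ioc)] with p hp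
    exact hinner_le p hp
  have step3 : (∫ p, (∫ x, Real.cos (p.1 * V x) * Real.cos (p.2 * V x) ∂ν) ∂P)
      ≤ ∫ p, G p ∂P := integral_mono_ae hinner_int hGint hae
  -- compute / bound ∫ G
  have gauss_bound : ∀ (sgn : ℝ), sgn = 1 ∨ sgn = -1 →
      (∫ p : ℝ × ℝ, Real.exp (-(b * (p.1 + sgn * p.2)^2)) ∂P) ≤ 2*L * Real.sqrt (π / b) := by
    intro sgn hsgn
    have hcont : Continuous (fun p : ℝ × ℝ => Real.exp (-(b * (p.1 + sgn * p.2)^2))) := by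
      continuity
    have hintP : Integrable (fun p : ℝ × ℝ => Real.exp (-(b * (p.1 + sgn * p.2)^2))) P := by
      refine Integrable.mono' (integrable_const (1:ℝ)) hcont.measurable.aestronglyMeasurable ?_
      filter_upwards with p
      rw [Real.norm_eq_abs, abs_of_nonneg (Real.exp_pos _).le]
      exact Real.exp_le_one_iff.2 (neg_nonpos.2 (by positivity))
    rw [hP, integral_prod _ (by rw [← hP]; exact hintP)]
    have inner_bound : ∀ t : ℝ, (∫ s, Real.exp (-(b * (t + sgn * s)^2)) ∂mL)
        ≤ Real.sqrt (π / b) := by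
      intro t
      have hg : Integrable (fun y : ℝ => Real.exp (-(b * y^2))) volume := by
        have := integrable_exp_neg_mul_sq hbpos
        simpa [neg_mul] using this
      have hshift : Integrable (fun s : ℝ => Real.exp (-(b * (t + sgn * s)^2))) volume := by
        rcases hsgn with h | h
        · subst h
          have hmp := measurePreserving_add_left (volume : Measure ℝ) t
          have := (hmp.integrable_comp hg.aestronglyMeasurable).2 hg
          simpa [Function.comp_def, one_mul] using this
        · subst h
          have : (fun s : ℝ => Real.exp (-(b * (t + (-1) * s)^2)))
              = fun s : ℝ => Real.exp (-(b * (s - t)^2)) := by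
            ext s; congr 1; ring
          rw [this]
          have hmp := measurePreserving_sub_right (volume : Measure ℝ) t
          have := (hmp.integrable_comp hg.aestronglyMeasurable).2 hg
          simpa [Function.comp_def] using this
      have hval : (∫ s : ℝ, Real.exp (-(b * (t + sgn * s)^2))) = Real.sqrt (π / b) := by
        rcases hsgn with h | h
        · subst h
          have h1 : ∀ s : ℝ, Real.exp (-(b * (t + 1 * s)^2)) = Real.exp (-b * (t + s)^2) := by
            intro s; congr 1; ring
          simp_rw [h1]
          rw [integral_add_left_eq_self (fun y : ℝ => Real.exp (-b * y^2)) t]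
          exact integral_gaussian b
        · subst h
          have h1 : ∀ s : ℝ, Real.exp (-(b * (t + (-1) * s)^2)) = Real.exp (-b * (s - t)^2) := by
            intro s; congr 1; ring
          simp_rw [h1]
          rw [integral_sub_right_eq_self (fun y : ℝ => Real.exp (-b * y^2)) t]
          exact integral_gaussian b
      calc (∫ s, Real.exp (-(b * (t + sgn * s)^2)) ∂mL)
          ≤ ∫ s : ℝ, Real.exp (-(b * (t + sgn * s)^2)) := by
            rw [hmL]
            apply setIntegral_le_integral hshift
            filter_upwards with s
            exact (Real.exp_pos _).le
        _ = Real.sqrt (π / b) := hval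
    have houter_meas : AEStronglyMeasurable
        (fun t : ℝ => ∫ s, Real.exp (-(b * (t + sgn * s)^2)) ∂mL) mL := by
      have : StronglyMeasurable (fun t : ℝ => ∫ s, Real.exp (-(b * (t + sgn * s)^2)) ∂mL) := by
        apply MeasureTheory.StronglyMeasurable.integral_prod_right'
          (f := fun q : ℝ × ℝ => Real.exp (-(b * (q.1 + sgn * q.2)^2)))
        exact hcont.stronglyMeasurable
      exact this.aestronglyMeasurable
    have houter_int : Integrable
        (fun t : ℝ => ∫ s, Real.exp (-(b * (t + sgn * s)^2)) ∂mL) mL := by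
      refine Integrable.mono' (integrable_const (Real.sqrt (π / b))) houter_meas ?_
      filter_upwards with t
      rw [Real.norm_eq_abs, abs_of_nonneg (integral_nonneg (fun s => (Real.exp_pos _).le))]
      exact inner_bound t
    calc (∫ t, (∫ s, Real.exp (-(b * (t + sgn * s)^2)) ∂mL) ∂mL)
        ≤ ∫ _t, Real.sqrt (π / b) ∂mL := by
          apply integral_mono houter_int (integrable_const _)
          intro t
          exact inner_bound t
      _ = 2*L * Real.sqrt (π / b) := by
          rw [integral_const, hmL, measureReal_restrict_apply_univ, measureReal_def, Real.volume_Ioc,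
            show L - (-L) = 2*L by ring, ENNReal.toReal_ofReal (by linarith), smul_eq_mul]
  have hGval : (∫ p, G p ∂P) ≤ 2*L * Real.sqrt (π / b) := by
    have hplus : Integrable (fun p : ℝ × ℝ => Real.exp (-(b * (p.1+p.2)^2))) P := by
      refine Integrable.mono' (integrable_const (1:ℝ)) ?_ ?_
      · exact ((Real.continuous_exp.comp
          (continuous_const.mul ((continuous_fst.add continuous_snd).pow 2)).neg).measurable).aestronglyMeasurable
      · filter_upwards with p
        rw [Real.norm_eq_abs, abs_of_nonneg (Real.exp_pos _).le]
        exact Real.exp_le_one_iff.2 (neg_nonpos.2 (by positivity))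
    have hminus : Integrable (fun p : ℝ × ℝ => Real.exp (-(b * (p.1-p.2)^2))) P := by
      refine Integrable.mono' (integrable_const (1:ℝ)) ?_ ?_
      · exact ((Real.continuous_exp.comp
          (continuous_const.mul ((continuous_fst.sub continuous_snd).pow 2)).neg).measurable).aestronglyMeasurable
      · filter_upwards with p
        rw [Real.norm_eq_abs, abs_of_nonneg (Real.exp_pos _).le]
        exact Real.exp_le_one_iff.2 (neg_nonpos.2 (by positivity))
    have hsplit : (∫ p, G p ∂P) = ((∫ p : ℝ × ℝ, Real.exp (-(b * (p.1+p.2)^2)) ∂P)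
        + ∫ p : ℝ × ℝ, Real.exp (-(b * (p.1-p.2)^2)) ∂P)/2 := by
      rw [hG]
      rw [integral_div, integral_add hplus hminus]
    rw [hsplit]
    have g1 := gauss_bound 1 (Or.inl rfl)
    have g2 := gauss_bound (-1) (Or.inr rfl)
    have e1 : ∀ p : ℝ × ℝ, -(b * (p.1 + 1 * p.2)^2) = -(b * (p.1+p.2)^2) := by
      intro p; ring_nf
    have e2 : ∀ p : ℝ × ℝ, -(b * (p.1 + (-1) * p.2)^2) = -(b * (p.1-p.2)^2) := by
      intro p; ring_nf
    simp_rw [e1] at g1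
    simp_rw [e2] at g2
    linarith
  exact step3.trans hGval

end RowK

lemma cover_pointwise {L T' : ℝ} (hL : 0 < L) (hT' : 0 ≤ T') (s : ℝ) :
    Real.exp (-(s^2)) ≤ Real.exp (-(T'^2))
      + (1/L^2) * ∑ k ∈ Finset.Icc (-((⌈T'*L⌉₊:ℤ)+1)) ((⌈T'*L⌉₊:ℤ)+1),
          (Kker L (s - 2*(k:ℝ)/L))^2 := by
  set N : ℤ := (⌈T'*L⌉₊:ℤ)+1 with hN
  have hsum_nonneg : (0:ℝ) ≤ ∑ k ∈ Finset.Icc (-N) N, (Kker L (s - 2*(k:ℝ)/L))^2 :=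
    Finset.sum_nonneg (fun k _ => sq_nonneg _)
  rcases le_or_gt (|s|) T' with hcase | hcase
  · -- covered case
    set k : ℤ := round (s*L/2) with hk
    have hround : |s*L/2 - (k:ℝ)| ≤ 1/2 := by
      rw [hk]
      exact abs_sub_round (s*L/2)
    have hdist : |s - 2*(k:ℝ)/L| ≤ 1/L := by
      have heq : s - 2*(k:ℝ)/L = (2/L) * (s*L/2 - (k:ℝ)) := by
        field_simp
      rw [heq, abs_mul, abs_of_nonneg (by positivity : (0:ℝ) ≤ 2/L)]
      calc 2/L * |s*L/2 - (k:ℝ)| ≤ 2/L * (1/2) := by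
            apply mul_le_mul_of_nonneg_left hround (by positivity)
        _ = 1/L := by ring
    have hmem : k ∈ Finset.Icc (-N) N := by
      rw [Finset.mem_Icc]
      have hkabs : |(k:ℝ)| ≤ T'*L/2 + 1/2 := by
        have h1 : |(k:ℝ)| ≤ |s*L/2| + 1/2 := by
          have := abs_sub_abs_le_abs_sub (k:ℝ) (s*L/2)
          have h2 := hround
          rw [abs_sub_comm] at h2
          linarith
        have h2 : |s*L/2| ≤ T'*L/2 := by
          rw [abs_div, abs_mul, abs_of_nonneg hL.le]
          have : |s| * L ≤ T' * L := mul_le_mul_of_nonneg_right hcase hL.le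
          calc |s| * L / |2| = |s| * L / 2 := by norm_num
            _ ≤ T' * L / 2 := by linarith
        linarith
      have hNreal : T'*L/2 + 1/2 ≤ (N:ℝ) := by
        rw [hN]
        push_cast
        have := Nat.le_ceil (T'*L)
        have hTL : 0 ≤ T'*L := by positivity
        linarith
      have habs : |(k:ℝ)| ≤ (N:ℝ) := hkabs.trans hNreal
      rw [abs_le] at habs
      constructor
      · exact_mod_cast habs.1
      · exact_mod_cast habs.2
    have hKlow : L ≤ Kker L (s - 2*(k:ℝ)/L) := Kker_lower hL hdist
    have hKsq : L^2 ≤ (Kker L (s - 2*(k:ℝ)/L))^2 := by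
      nlinarith
    have hsum : L^2 ≤ ∑ j ∈ Finset.Icc (-N) N, (Kker L (s - 2*(j:ℝ)/L))^2 := by
      calc L^2 ≤ (Kker L (s - 2*(k:ℝ)/L))^2 := hKsq
        _ ≤ ∑ j ∈ Finset.Icc (-N) N, (Kker L (s - 2*(j:ℝ)/L))^2 :=
          Finset.single_le_sum (f := fun j : ℤ => (Kker L (s - 2*(j:ℝ)/L))^2) (fun j _ => sq_nonneg _) hmem
    have h1 : (1:ℝ) ≤ (1/L^2) * ∑ j ∈ Finset.Icc (-N) N, (Kker L (s - 2*(j:ℝ)/L))^2 := by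
      have hpos : (0:ℝ) < 1/L^2 := by positivity
      have := mul_le_mul_of_nonneg_left hsum hpos.le
      calc (1:ℝ) = (1/L^2) * L^2 := by field_simp
        _ ≤ _ := this
    have h2 : Real.exp (-(s^2)) ≤ 1 := Real.exp_le_one_iff.2 (neg_nonpos.2 (sq_nonneg s))
    have h3 : (0:ℝ) < Real.exp (-(T'^2)) := Real.exp_pos _
    linarith
  · have h1 : Real.exp (-(s^2)) ≤ Real.exp (-(T'^2)) := by
      apply Real.exp_le_exp.2
      have : T'^2 ≤ s^2 := by nlinarith [sq_abs s, abs_nonneg s]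
      linarith
    have h2 : (0:ℝ) ≤ (1/L^2) * ∑ k ∈ Finset.Icc (-N) N, (Kker L (s - 2*(k:ℝ)/L))^2 := by
      positivity
    linarith

lemma row_exp_bound {μ : Measure ℝ} [IsProbabilityMeasure μ] (hmean : (∫ x, x ∂μ) = 0)
    (hvar : (∫ x, x^2 ∂μ) = 1)
    (hthird : Integrable (fun x => |x|^3) μ) {n : ℕ} (c : Fin n → ℝ)
    (hc : ∀ j, 0 ≤ c j ∧ c j ≤ 2) {L : ℝ} (hL : 0 < L)
    (hLsmall : 2*L * (2 * (2 * (∫ x, |x|^3 ∂μ) + 6)) ≤ 3)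
    (hσ : 0 < ∑ j, (c j)^2) {T' : ℝ} (hT' : 0 ≤ T') :
    (∫ x : Fin n → ℝ, Real.exp (-((∑ j, x j * c j)^2)) ∂(Measure.pi fun _ => μ))
      ≤ Real.exp (-(T'^2)) + (1/L^2) * ((2*(⌈T'*L⌉₊:ℝ)+3)
          * (2*L * Real.sqrt (π / ((∑ j, (c j)^2)/4)))) := by
  set ν : Measure (Fin n → ℝ) := Measure.pi fun _ => μ with hν
  haveI : IsProbabilityMeasure ν := by rw [hν]; infer_instance
  set S : (Fin n → ℝ) → ℝ := fun x => ∑ j, x j * c j with hS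
  have hSmeas : Measurable S := measurable_S c
  set N : ℤ := (⌈T'*L⌉₊:ℤ)+1 with hN
  set Kk : ℤ → (Fin n → ℝ) → ℝ := fun k x => (Kker L (S x - 2*(k:ℝ)/L))^2 with hKk
  have hKint : ∀ k : ℤ, Integrable (Kk k) ν := by
    intro k
    refine Integrable.mono' (integrable_const ((2*L)^2)) ?_ ?_
    · exact (((Kker_measurable hL).comp (hSmeas.sub_const _)).pow_const 2).aestronglyMeasurable
    · filter_upwards with x
      rw [Real.norm_eq_abs, abs_of_nonneg (sq_nonneg _), hKk]
      have := Kker_le hL (S x - 2*(k:ℝ)/L)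
      dsimp only
      nlinarith [abs_nonneg (Kker L (S x - 2*(k:ℝ)/L)), neg_abs_le (Kker L (S x - 2*(k:ℝ)/L)),
        le_abs_self (Kker L (S x - 2*(k:ℝ)/L))]
  have hExpInt : Integrable (fun x => Real.exp (-((S x)^2))) ν := by
    refine Integrable.mono' (integrable_const (1:ℝ)) ?_ ?_
    · exact (Real.continuous_exp.measurable.comp ((hSmeas.pow_const 2).neg)).aestronglyMeasurable
    · filter_upwards with x
      rw [Real.norm_eq_abs, abs_of_nonneg (Real.exp_pos _).le]
      exact Real.exp_le_one_iff.2 (neg_nonpos.2 (sq_nonneg _))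
  have hRHSint : Integrable (fun x => Real.exp (-(T'^2))
      + (1/L^2) * ∑ k ∈ Finset.Icc (-N) N, Kk k x) ν := by
    apply Integrable.add (integrable_const _)
    apply Integrable.const_mul
    exact integrable_finset_sum _ (fun k _ => hKint k)
  have hmono : (∫ x, Real.exp (-((S x)^2)) ∂ν)
      ≤ ∫ x, (Real.exp (-(T'^2)) + (1/L^2) * ∑ k ∈ Finset.Icc (-N) N, Kk k x) ∂ν := by
    apply integral_mono hExpInt hRHSint
    intro x
    exact cover_pointwise hL hT' (S x)
  have hval : (∫ x, (Real.exp (-(T'^2)) + (1/L^2) * ∑ k ∈ Finset.Icc (-N) N, Kk k x) ∂ν)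
      = Real.exp (-(T'^2)) + (1/L^2) * ∑ k ∈ Finset.Icc (-N) N, ∫ x, Kk k x ∂ν := by
    rw [integral_add (integrable_const _)
      ((integrable_finset_sum _ (fun k _ => hKint k)).const_mul _),
      integral_const, measureReal_def, measure_univ, ENNReal.toReal_one, one_smul,
      integral_const_mul _ _, integral_finset_sum _ (fun k _ => hKint k)]
  have hsum_bound : ∑ k ∈ Finset.Icc (-N) N, (∫ x, Kk k x ∂ν)
      ≤ (2*(⌈T'*L⌉₊:ℝ)+3) * (2*L * Real.sqrt (π / ((∑ j, (c j)^2)/4))) := by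
    have hcard : ((Finset.Icc (-N) N).card : ℝ) = 2*(⌈T'*L⌉₊:ℝ)+3 := by
      rw [Int.card_Icc, hN]
      have h9 : ((⌈T'*L⌉₊:ℤ) + 1) + 1 - -((⌈T'*L⌉₊:ℤ) + 1) = ((2*⌈T'*L⌉₊ + 3 : ℕ) : ℤ) := by
        push_cast; ring
      rw [h9, Int.toNat_natCast]
      push_cast
      ring
    calc ∑ k ∈ Finset.Icc (-N) N, (∫ x, Kk k x ∂ν)
        ≤ ∑ _k ∈ Finset.Icc (-N) N, (2*L * Real.sqrt (π / ((∑ j, (c j)^2)/4))) := by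
          apply Finset.sum_le_sum
          intro k _
          exact rowK_bound hmean hvar hthird c hc (2*(k:ℝ)/L) hL hLsmall hσ
      _ = ((Finset.Icc (-N) N).card : ℝ) * (2*L * Real.sqrt (π / ((∑ j, (c j)^2)/4))) := by
          rw [Finset.sum_const, nsmul_eq_mul]
      _ = (2*(⌈T'*L⌉₊:ℝ)+3) * (2*L * Real.sqrt (π / ((∑ j, (c j)^2)/4))) := by
          rw [hcard]
  calc (∫ x, Real.exp (-((S x)^2)) ∂ν) ≤ _ := hmono
    _ = _ := hval
    _ ≤ _ := by
      have hpos : (0:ℝ) < 1/L^2 := by positivity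
      have := mul_le_mul_of_nonneg_left hsum_bound hpos.le
      linarith

lemma le_rpow_of_ge {C e x : ℝ} (he : 0 < e) (hx : (max 1 C) ^ (1/e) ≤ x) : C ≤ x ^ e := by
  have h1 : (1:ℝ) ≤ max 1 C := le_max_left _ _
  have hb : (0:ℝ) < max 1 C := by linarith
  have hbase : (0:ℝ) < (max 1 C) ^ (1/e) := Real.rpow_pos_of_pos hb _
  calc C ≤ max 1 C := le_max_right _ _
    _ = ((max 1 C) ^ (1/e)) ^ e := by
        rw [← Real.rpow_mul hb.le, one_div, inv_mul_cancel₀ (ne_of_gt he), Real.rpow_one]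
    _ ≤ x ^ e := Real.rpow_le_rpow hbase.le hx he.le

lemma per_row_final {μ : Measure ℝ} [IsProbabilityMeasure μ] (hmean : (∫ x, x ∂μ) = 0)
    (hvar : (∫ x, x^2 ∂μ) = 1)
    (hthird : Integrable (fun x => |x|^3) μ) (k' : ℝ) (hk' : 0 < k') :
    ∃ n₀ : ℕ, ∀ n : ℕ, n₀ ≤ n → ∀ c : Fin n → ℝ,
      (∀ j, 0 ≤ c j ∧ c j ≤ 2) → k' * n ≤ ∑ j, (c j)^2 →
      (∫ x : Fin n → ℝ, Real.exp (-((∑ j, x j * c j)^2)) ∂(Measure.pi fun _ => μ))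
        ≤ Real.exp (-(Real.log n / 3)) := by
  set ρ : ℝ := ∫ x, |x|^3 ∂μ with hρ
  have hρ0 : 0 ≤ ρ := integral_nonneg (fun x => by positivity)
  set L : ℝ := 3 / (2*(2*(2*ρ+6))) with hLdef
  have hL : 0 < L := by rw [hLdef]; positivity
  have hLsmall : 2*L * (2*(2*ρ+6)) ≤ 3 := by
    have h9 : 2*L*(2*(2*ρ+6)) = 3 := by
      rw [hLdef]
      field_simp
    linarith
  set D : ℝ := Real.sqrt (4*π/k') with hD
  have hD0 : 0 ≤ D := Real.sqrt_nonneg _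
  set C₁ : ℝ := 4*Real.sqrt 6*D with hC₁
  set C₂ : ℝ := (10/L)*D with hC₂
  have hC₁0 : 0 ≤ C₁ := by rw [hC₁]; positivity
  have hC₂0 : 0 ≤ C₂ := by rw [hC₂]; positivity
  set M : ℝ := max 3 (max ((max 1 3) ^ (1/((2:ℝ)/3)))
    (max ((max 1 (3*C₁)) ^ (1/((1:ℝ)/12))) ((max 1 (3*C₂)) ^ (1/((1:ℝ)/6))))) with hM
  refine ⟨⌈M⌉₊, fun n hn c hc hσk => ?_⟩
  -- basic facts about n
  have hMn : M ≤ (n:ℝ) := by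
    have := (Nat.ceil_le (α := ℝ)).1 hn
    exact this
  have hn3 : (3:ℝ) ≤ (n:ℝ) := le_trans (le_max_left _ _) hMn
  have hn0 : (0:ℝ) < (n:ℝ) := by linarith
  have hn1 : (1:ℝ) ≤ (n:ℝ) := by linarith
  have hlog0 : 0 ≤ Real.log n := Real.log_nonneg hn1
  have hσ : 0 < ∑ j, (c j)^2 := lt_of_lt_of_le (by positivity) hσk
  -- the three rpow conditions
  have hcond1 : (3:ℝ) ≤ (n:ℝ) ^ ((2:ℝ)/3) :=
    le_rpow_of_ge (by norm_num) (le_trans (le_trans (le_max_left _ _) (le_max_right _ _)) hMn)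
  have hcond2 : 3*C₁ ≤ (n:ℝ) ^ ((1:ℝ)/12) :=
    le_rpow_of_ge (by norm_num)
      (le_trans (le_trans (le_trans (le_max_left _ _) (le_max_right _ _)) (le_max_right _ _)) hMn)
  have hcond3 : 3*C₂ ≤ (n:ℝ) ^ ((1:ℝ)/6) :=
    le_rpow_of_ge (by norm_num)
      (le_trans (le_trans (le_trans (le_max_right _ _) (le_max_right _ _)) (le_max_right _ _)) hMn)
  -- apply the row bound with T' = sqrt (log n)
  set T' : ℝ := Real.sqrt (Real.log n) with hT'def
  have hT' : 0 ≤ T' := Real.sqrt_nonneg _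
  have hrow := row_exp_bound hmean hvar hthird c hc hL (by
    rw [← hρ]; exact hLsmall) hσ hT'
  -- Step A : exp(-T'^2) = n⁻¹ as rpow
  have hA : Real.exp (-(T'^2)) = (n:ℝ) ^ (-(1:ℝ)) := by
    rw [hT'def, Real.sq_sqrt hlog0, Real.rpow_def_of_pos hn0]
    ring_nf
  -- Step B : sqrt term bound
  have hB : Real.sqrt (π / ((∑ j, (c j)^2)/4)) ≤ D * (n:ℝ) ^ (-(1:ℝ)/2) := by
    have h1 : π / ((∑ j, (c j)^2)/4) = 4*π/(∑ j, (c j)^2) := by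
      field_simp
    have h2 : 4*π/(∑ j, (c j)^2) ≤ 4*π/(k'*n) := by
      apply div_le_div_of_nonneg_left (by positivity) (by positivity) hσk
    have hinv : ((n:ℝ)^((1:ℝ)/2))⁻¹ = (n:ℝ)^(-(1:ℝ)/2) := by
      rw [← Real.rpow_neg hn0.le]
      norm_num
    have h3 : Real.sqrt (4*π/(k'*n)) = D * (n:ℝ) ^ (-(1:ℝ)/2) := by
      rw [show 4*π/(k'*(n:ℝ)) = (4*π/k')/(n:ℝ) by ring, Real.sqrt_div (by positivity) _,
        Real.sqrt_eq_rpow (n:ℝ), div_eq_mul_inv, hinv, hD]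
    calc Real.sqrt (π / ((∑ j, (c j)^2)/4)) = Real.sqrt (4*π/(∑ j, (c j)^2)) := by rw [h1]
      _ ≤ Real.sqrt (4*π/(k'*n)) := Real.sqrt_le_sqrt h2
      _ = D * (n:ℝ) ^ (-(1:ℝ)/2) := h3
  -- Step C : ceiling bound
  have hC : (2*(⌈T'*L⌉₊:ℝ)+3) ≤ 2*(Real.sqrt 6 * (n:ℝ)^((1:ℝ)/12))*L + 5 := by
    have hceil : (⌈T'*L⌉₊:ℝ) < T'*L + 1 := Nat.ceil_lt_add_one (by positivity)
    have hT'b : T' ≤ Real.sqrt 6 * (n:ℝ)^((1:ℝ)/12) := by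
      have hlog : Real.log n ≤ 6 * (n:ℝ)^((1:ℝ)/6) := by
        have := Real.log_le_rpow_div hn0.le (by norm_num : (0:ℝ) < 1/6)
        calc Real.log n ≤ (n:ℝ)^((1:ℝ)/6) / (1/6) := by
              rw [show (1:ℝ)/6 = ((1:ℝ)/6) from rfl]; exact this
          _ = 6 * (n:ℝ)^((1:ℝ)/6) := by ring
      calc T' = Real.sqrt (Real.log n) := hT'def
        _ ≤ Real.sqrt (6 * (n:ℝ)^((1:ℝ)/6)) := Real.sqrt_le_sqrt hlog
        _ = Real.sqrt 6 * Real.sqrt ((n:ℝ)^((1:ℝ)/6)) := Real.sqrt_mul (by norm_num) _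
        _ = Real.sqrt 6 * (n:ℝ)^((1:ℝ)/12) := by
            congr 1
            rw [Real.sqrt_eq_rpow, ← Real.rpow_mul hn0.le]
            norm_num
    have hmul : T'*L ≤ (Real.sqrt 6 * (n:ℝ)^((1:ℝ)/12))*L :=
      mul_le_mul_of_nonneg_right hT'b hL.le
    linarith
  -- put the bounds together
  have hmid : (∫ x : Fin n → ℝ, Real.exp (-((∑ j, x j * c j)^2)) ∂(Measure.pi fun _ => μ))
      ≤ (n:ℝ)^(-(1:ℝ)) + C₁ * (n:ℝ)^((1:ℝ)/12) * (n:ℝ)^(-(1:ℝ)/2) + C₂ * (n:ℝ)^(-(1:ℝ)/2) := by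
    have hprod : (2*(⌈T'*L⌉₊:ℝ)+3) * (2*L * Real.sqrt (π / ((∑ j, (c j)^2)/4)))
        ≤ (2*(Real.sqrt 6 * (n:ℝ)^((1:ℝ)/12))*L + 5) * (2*L * (D * (n:ℝ) ^ (-(1:ℝ)/2))) := by
      apply mul_le_mul hC
      · apply mul_le_mul_of_nonneg_left hB (by positivity)
      · positivity
      · positivity
    have hsc := mul_le_mul_of_nonneg_left hprod (by positivity : (0:ℝ) ≤ 1/L^2)
    have halg : (1/L^2) * ((2*(Real.sqrt 6 * (n:ℝ)^((1:ℝ)/12))*L + 5) * (2*L * (D * (n:ℝ) ^ (-(1:ℝ)/2))))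
        = C₁ * (n:ℝ)^((1:ℝ)/12) * (n:ℝ)^(-(1:ℝ)/2) + C₂ * (n:ℝ)^(-(1:ℝ)/2) := by
      rw [hC₁, hC₂]
      field_simp
      ring
    calc (∫ x : Fin n → ℝ, Real.exp (-((∑ j, x j * c j)^2)) ∂(Measure.pi fun _ => μ))
        ≤ Real.exp (-(T'^2)) + (1/L^2) * ((2*(⌈T'*L⌉₊:ℝ)+3)
            * (2*L * Real.sqrt (π / ((∑ j, (c j)^2)/4)))) := hrow
      _ ≤ (n:ℝ)^(-(1:ℝ)) + (C₁ * (n:ℝ)^((1:ℝ)/12) * (n:ℝ)^(-(1:ℝ)/2) + C₂ * (n:ℝ)^(-(1:ℝ)/2)) := by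
          rw [hA]
          have := hsc.trans_eq halg
          linarith
      _ = _ := by ring
  -- three term bounds
  have ht1 : (n:ℝ)^(-(1:ℝ)) ≤ (1/3) * (n:ℝ)^(-(1:ℝ)/3) := by
    have key := mul_le_mul_of_nonneg_right hcond1 (Real.rpow_nonneg hn0.le (-(1:ℝ)))
    rw [← Real.rpow_add hn0, show (2:ℝ)/3 + -(1:ℝ) = -(1:ℝ)/3 by norm_num] at key
    linarith
  have ht2 : C₁ * (n:ℝ)^((1:ℝ)/12) * (n:ℝ)^(-(1:ℝ)/2) ≤ (1/3) * (n:ℝ)^(-(1:ℝ)/3) := by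
    have key := mul_le_mul_of_nonneg_right hcond2 (Real.rpow_nonneg hn0.le (-(5:ℝ)/12))
    rw [← Real.rpow_add hn0, show (1:ℝ)/12 + -(5:ℝ)/12 = -(1:ℝ)/3 by norm_num] at key
    have lhs_eq : C₁ * (n:ℝ)^((1:ℝ)/12) * (n:ℝ)^(-(1:ℝ)/2) = C₁ * (n:ℝ)^(-(5:ℝ)/12) := by
      rw [mul_assoc, ← Real.rpow_add hn0, show (1:ℝ)/12 + -(1:ℝ)/2 = -(5:ℝ)/12 by norm_num]
    rw [lhs_eq]
    linarith
  have ht3 : C₂ * (n:ℝ)^(-(1:ℝ)/2) ≤ (1/3) * (n:ℝ)^(-(1:ℝ)/3) := by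
    have key := mul_le_mul_of_nonneg_right hcond3 (Real.rpow_nonneg hn0.le (-(1:ℝ)/2))
    rw [← Real.rpow_add hn0, show (1:ℝ)/6 + -(1:ℝ)/2 = -(1:ℝ)/3 by norm_num] at key
    linarith
  have hfin : Real.exp (-(Real.log n / 3)) = (n:ℝ)^(-(1:ℝ)/3) := by
    rw [Real.rpow_def_of_pos hn0]
    ring_nf
  rw [hfin]
  calc (∫ x : Fin n → ℝ, Real.exp (-((∑ j, x j * c j)^2)) ∂(Measure.pi fun _ => μ))
      ≤ (n:ℝ)^(-(1:ℝ)) + C₁ * (n:ℝ)^((1:ℝ)/12) * (n:ℝ)^(-(1:ℝ)/2) + C₂ * (n:ℝ)^(-(1:ℝ)/2) := hmid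
    _ ≤ (1/3) * (n:ℝ)^(-(1:ℝ)/3) + (1/3) * (n:ℝ)^(-(1:ℝ)/3) + (1/3) * (n:ℝ)^(-(1:ℝ)/3) := by
        linarith
    _ = (n:ℝ)^(-(1:ℝ)/3) := by ring

end AuxGFEB

theorem general_fading_exp_bound (μ : Measure ℝ) [IsProbabilityMeasure μ]
    (hmean : (∫ x, x ∂μ) = 0) (hvar : (∫ x, x^2 ∂μ) = 1)
    (hthird : Integrable (fun x => |x|^3) μ)
    (α k' : ℝ) (hα : 0 < α) (hk' : 0 < k') :
    ∃ a : ℝ, 0 < a ∧ ∃ n₀ : ℕ, ∀ n : ℕ, n₀ ≤ n →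
      ∀ c : Fin n → ℝ, (∀ j, 0 ≤ c j ∧ c j ≤ 2) → k' * n ≤ ∑ j, (c j)^2 →
      (∫ H, Real.exp (-(euclNorm (mulVec' H c))^2)
          ∂(Measure.pi fun _ : Fin (⌈α * n⌉₊) => Measure.pi fun _ : Fin n => μ))
        ≤ Real.exp (-(a * n * Real.log n)) := by
  obtain ⟨n₀, hrow⟩ := per_row_final hmean hvar hthird k' hk'
  refine ⟨α/3, by positivity, max n₀ 1, fun n hn c hc hσk => ?_⟩
  have hn₀ : n₀ ≤ n := le_trans (le_max_left _ _) hn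
  have hn1 : 1 ≤ n := le_trans (le_max_right _ _) hn
  have hn1' : (1:ℝ) ≤ (n:ℝ) := by exact_mod_cast hn1
  have hlog0 : 0 ≤ Real.log n := Real.log_nonneg hn1'
  set m : ℕ := ⌈α * n⌉₊ with hm
  set ν : Measure (Fin n → ℝ) := Measure.pi fun _ => μ with hν
  haveI : IsProbabilityMeasure ν := by rw [hν]; infer_instance
  set Erow : ℝ := ∫ x : Fin n → ℝ, Real.exp (-((∑ j, x j * c j)^2)) ∂ν with hErow
  have hErow0 : 0 ≤ Erow := integral_nonneg (fun x => (Real.exp_pos _).le)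
  have hErowle := hrow n hn₀ c hc hσk
  -- factorization
  have hfact : (∫ H, Real.exp (-(euclNorm (mulVec' H c))^2)
      ∂(Measure.pi fun _ : Fin m => Measure.pi fun _ : Fin n => μ)) = Erow ^ m := by
    have h1 : ∀ H : Fin m → Fin n → ℝ, Real.exp (-(euclNorm (mulVec' H c))^2)
        = ∏ i : Fin m, Real.exp (-((∑ j, H i j * c j)^2)) := by
      intro H
      rw [euclNorm, Real.sq_sqrt (Finset.sum_nonneg fun i _ => sq_nonneg _)]
      rw [← Real.exp_sum]
      congr 1
      rw [← Finset.sum_neg_distrib]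
      rfl
    simp_rw [h1]
    rw [integral_pi_prod (fun _ : Fin m => Measure.pi fun _ : Fin n => μ)
      (fun _ row => Real.exp (-((∑ j, row j * c j)^2)))]
    rw [Finset.prod_const, Finset.card_univ, Fintype.card_fin]
  rw [hfact]
  have hm_ge : α * n ≤ (m:ℝ) := by rw [hm]; exact Nat.le_ceil _
  calc Erow ^ m ≤ (Real.exp (-(Real.log n / 3))) ^ m := pow_le_pow_left₀ hErow0 hErowle m
    _ = Real.exp ((m:ℝ) * (-(Real.log n / 3))) := by rw [← Real.exp_nat_mul]
    _ ≤ Real.exp (-(α/3 * n * Real.log n)) := by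
        apply Real.exp_le_exp.2
        have h2 : α * n * Real.log n ≤ (m:ℝ) * Real.log n :=
          mul_le_mul_of_nonneg_right hm_ge hlog0
        nlinarith
end
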